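/- arXiv:1012.3833 — 11 statements merged into one kernel-verified Lean document; each statement's English description precedes it below -/
import Mathlib

section
/- For every natural number n and variable x, the Legendre polynomial satisfies P_n(x) = \sum_{k=0}^{n} \binom{n+k}{2k} \binom{2k}{k} ((x-1)/2)^k. -/
open Polynomial Finset

/-- The Legendre polynomial `P n`, defined via Rodrigues' formula. -/
noncomputable def legendre (n : ℕ) : Polynomial ℚ :=
  ((2 ^ n * n.factorial : ℚ)⁻¹) • ((fun q => Polynomial.derivative q)^[n] ((X ^ 2 - 1) ^ n))

/-! Write `(X ^ 2 - 1) ^ n = (X - 1) ^ n * ((X - 1) + 2) ^ n` and expand the second factor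
binomially; differentiating `n` times term by term turns `(X - 1) ^ (n + j)` into a multiple of
`(X - 1) ^ j`, and the resulting coefficient matches `C(n+k, 2k) C(2k, k) / 2 ^ k` by the identity
`C(n, j) C(n+j, n) = C(n+j, 2j) C(2j, j)`. -/

theorem Nat.choose_mul_choose_add (n j : ℕ) :
    n.choose j * (n + j).choose n = (n + j).choose (2 * j) * (2 * j).choose j := by
  rw [Nat.choose_mul (by omega), Nat.choose_symm_add, mul_comm]
  congr 2 <;> omega

section

variable {R : Type*} [CommRing R]

theorem X_sq_sub_one_pow_eq_sum (n : ℕ) :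
    ((X : R[X]) ^ 2 - 1) ^ n =
      ∑ j ∈ range (n + 1), C ((n.choose j : R) * 2 ^ (n - j)) * (X - 1) ^ (n + j) := by
  rw [show (X : R[X]) ^ 2 - 1 = (X - 1) * ((X - 1) + 2) by ring, mul_pow, add_pow,
    mul_sum]
  refine sum_congr rfl fun j _ => ?_
  simp only [map_mul, map_pow, map_natCast, map_ofNat]
  ring

theorem iterate_derivative_X_sq_sub_one_pow (n : ℕ) :
    derivative^[n] (((X : R[X]) ^ 2 - 1) ^ n) =
      ∑ j ∈ range (n + 1),
        C ((n.choose j : R) * 2 ^ (n - j) * (n + j).descFactorial n) * (X - 1) ^ j := by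
  rw [X_sq_sub_one_pow_eq_sum, iterate_derivative_sum, ← C_1]
  refine sum_congr rfl fun j _ => ?_
  rw [iterate_derivative_C_mul, iterate_derivative_X_sub_pow, Nat.add_sub_cancel_left,
    nsmul_eq_mul, ← mul_assoc, ← C_eq_natCast, ← C_mul]

end

theorem rodrigues_coeff_eq {n j : ℕ} (hj : j ≤ n) :
    (2 ^ n * n.factorial : ℚ)⁻¹ *
        ((n.choose j : ℚ) * 2 ^ (n - j) * (n + j).descFactorial n) =
      ((n + j).choose (2 * j) * (2 * j).choose j : ℚ) * (1 / 2) ^ j := by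
  have h2 : (2 : ℚ) ^ n = 2 ^ (n - j) * 2 ^ j := by rw [← pow_add, Nat.sub_add_cancel hj]
  have hc : ((n.choose j * (n + j).choose n : ℕ) : ℚ) =
      (((n + j).choose (2 * j) * (2 * j).choose j : ℕ) : ℚ) := by
    rw [Nat.choose_mul_choose_add]
  push_cast at hc
  rw [Nat.descFactorial_eq_factorial_mul_choose, h2, ← hc]
  push_cast
  rw [one_div, inv_pow]
  field_simp

theorem stmt0 (n : ℕ) :
    legendre n = ∑ k ∈ Finset.range (n + 1),
      ((n + k).choose (2 * k) * (2 * k).choose k : ℚ) •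
        (Polynomial.C (1 / 2 : ℚ) * (X - 1)) ^ k := by
  rw [legendre, show (fun q : ℚ[X] => derivative q) = ⇑derivative from rfl,
    iterate_derivative_X_sq_sub_one_pow, smul_sum]
  refine sum_congr rfl fun j hj => ?_
  rw [smul_eq_C_mul, ← mul_assoc, ← C_mul,
    rodrigues_coeff_eq (Nat.lt_succ_iff.mp (mem_range.mp hj)), smul_eq_C_mul,
    mul_pow, ← C_pow, ← mul_assoc, ← C_mul, mul_comm]
end

section
/- Let p be an odd prime and k an integer with 1 \le k \le (p-1)/2. Then \binom{(p-1)/2 + k}{2k} \equiv \binom{2k}{k}/(-16)^k \cdot (1 - p^2 \sum_{i=1}^{k} 1/(2i-1)^2) \pmod{p^4}, where the congruence is between p-adic integers (or rational numbers whose denominators are coprime to p). -/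
/-!
Write `p = 2n + 1`. Since `4 (n + i) (n + 1 - i) = p² - (2i - 1)²`, the number
`4^k (2k)! C(n + k, 2k)` is `∏_{i ≤ k} (p² - (2i - 1)²)`. To first order in `p²` this
product is `∏ (-(2i - 1)²) · (1 - p² ∑ 1 / (2i - 1)²)`, with an error divisible by `p⁴`
over `ℤ`, and `∏ (-(2i - 1)²) = 4^k (2k)! C(2k, k) / (-16)^k`. As `2k < p`, the factor
`4^k (2k)!` is prime to `p`.
-/

open Finset

/-- `a ≡ b (mod p^k)` as rationals: `a - b` is `p^k` times a `p`-integral rational. -/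
def ratCongr (p k : ℕ) (a b : ℚ) : Prop :=
  ∃ c : ℚ, a - b = (p : ℚ) ^ k * c ∧ ¬ (p ∣ c.den)

open Nat

theorem ratCongr_of_natCast_mul_sub_eq {p k : ℕ} {a b : ℚ} (D : ℕ) (hD : ¬ p ∣ D) (E : ℤ)
    (h : (D : ℚ) * (a - b) = (p : ℚ) ^ k * E) : ratCongr p k a b := by
  have hD0 : (D : ℚ) ≠ 0 := by
    rintro hD0
    exact hD (by simp [Nat.cast_eq_zero.mp hD0])
  refine ⟨E / D, by rw [← mul_div_assoc, ← h, mul_div_cancel_left₀ _ hD0],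
    fun hpden => hD ?_⟩
  have hden : (((E : ℚ) / D).den : ℤ) ∣ D := by
    rw [show (E : ℚ) / D = Rat.divInt E D by rw [Rat.divInt_eq_div]; push_cast; rfl]
    exact Rat.den_dvd E D
  exact Int.natCast_dvd_natCast.mp ((Int.natCast_dvd_natCast.mpr hpden).trans hden)

theorem Finset.sq_dvd_prod_add_sub_first_order {ι R : Type*} [CommRing R] [DecidableEq ι]
    (s : Finset ι) (x : R) (b : ι → R) :
    x ^ 2 ∣ ∏ i ∈ s, (x + b i) - ∏ i ∈ s, b i
      - x * ∑ i ∈ s, ∏ j ∈ s.erase i, b j := by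
  induction s using Finset.induction_on with
  | empty => simp
  | insert a s ha ih =>
    obtain ⟨E, hE⟩ := ih
    have herase : ∑ i ∈ s, ∏ j ∈ (insert a s).erase i, b j
        = b a * ∑ i ∈ s, ∏ j ∈ s.erase i, b j := by
      rw [mul_sum]
      refine sum_congr rfl fun i hi => ?_
      rw [erase_insert_of_ne (by rintro rfl; exact ha hi),
        prod_insert fun h => ha (erase_subset _ _ h)]
    refine ⟨∑ i ∈ s, ∏ j ∈ s.erase i, b j + (x + b a) * E, ?_⟩
    rw [prod_insert ha, prod_insert ha, sum_insert ha, erase_insert ha, herase]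
    linear_combination (x + b a) * hE

theorem Finset.prod_mul_sum_inv {ι K : Type*} [Field K] [DecidableEq ι] (s : Finset ι)
    (b : ι → K) (hb : ∀ i ∈ s, b i ≠ 0) :
    (∏ i ∈ s, b i) * ∑ i ∈ s, (b i)⁻¹ = ∑ i ∈ s, ∏ j ∈ s.erase i, b j := by
  rw [mul_sum]
  refine sum_congr rfl fun i hi => ?_
  rw [← mul_prod_erase s b hi, mul_comm (b i), mul_assoc, mul_inv_cancel₀ (hb i hi), mul_one]

theorem four_pow_mul_descFactorial_eq_prod_sq_sub_sq {n k : ℕ} (hk : k ≤ n) :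
    (4 : ℤ) ^ k * (n + k).descFactorial (2 * k)
      = ∏ i ∈ Icc 1 k, ((2 * n + 1 : ℤ) ^ 2 - (2 * i - 1) ^ 2) := by
  induction k with
  | zero => simp
  | succ k ih =>
    rw [prod_Icc_succ_top (by omega), ← ih (by omega), show n + (k + 1) = n + k + 1 by ring,
      show 2 * (k + 1) = 2 * k + 1 + 1 by ring, Nat.succ_descFactorial_succ,
      Nat.descFactorial_succ, show n + k - 2 * k = n - k by omega]
    push_cast [Nat.cast_sub (by omega : k ≤ n)]
    ring

theorem factorial_two_mul_eq_prod_odd (k : ℕ) :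
    ((2 * k)! : ℤ) = 2 ^ k * k ! * ∏ i ∈ Icc 1 k, (2 * (i : ℤ) - 1) := by
  induction k with
  | zero => simp
  | succ k ih =>
    rw [prod_Icc_succ_top (by omega), show 2 * (k + 1) = 2 * k + 1 + 1 by ring,
      Nat.factorial_succ, Nat.factorial_succ, Nat.factorial_succ]
    push_cast [ih]
    ring

theorem factorial_two_mul_mul_choose_eq_four_pow_mul_sq_prod_odd (k : ℕ) :
    ((2 * k)! * (2 * k).choose k : ℤ) = 4 ^ k * (∏ i ∈ Icc 1 k, (2 * (i : ℤ) - 1)) ^ 2 := by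
  have hchoose : ((2 * k).choose k * k ! * k ! : ℤ) = (2 * k)! := by
    exact_mod_cast two_mul k ▸ Nat.add_choose_mul_factorial_mul_factorial k k
  have hfact := factorial_two_mul_eq_prod_odd k
  refine mul_right_cancel₀ (by positivity : (k ! * k ! : ℤ) ≠ 0) ?_
  rw [show (4 : ℤ) ^ k = 2 ^ k * 2 ^ k by rw [← mul_pow]; norm_num]
  linear_combination (2 * k)! * hchoose
    + ((2 * k)! + 2 ^ k * k ! * ∏ i ∈ Icc 1 k, (2 * (i : ℤ) - 1)) * hfact

theorem four_pow_mul_factorial_mul_choose_div_neg_sixteen_pow (k : ℕ) :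
    (4 ^ k * (2 * k)! : ℚ) * ((2 * k).choose k / (-16) ^ k)
      = ∏ i ∈ Icc 1 k, -(2 * (i : ℚ) - 1) ^ 2 := by
  have h : ((2 * k)! * (2 * k).choose k : ℚ)
      = 4 ^ k * (∏ i ∈ Icc 1 k, (2 * (i : ℚ) - 1)) ^ 2 := by
    exact_mod_cast factorial_two_mul_mul_choose_eq_four_pow_mul_sq_prod_odd k
  rw [prod_neg, prod_pow, card_Icc, Nat.add_sub_cancel,
    show (-16 : ℚ) ^ k = (-1) ^ k * (4 ^ k * 4 ^ k) by rw [← mul_pow, ← mul_pow]; norm_num]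
  field_simp
  rw [h, ← pow_mul, mul_comm k 2, (even_two_mul k).neg_one_pow, mul_one]

theorem Nat.Prime.not_dvd_four_pow_mul_factorial {p : ℕ} (hp : p.Prime) (hodd : p ≠ 2) (k : ℕ)
    {m : ℕ} (hm : m < p) : ¬ p ∣ 4 ^ k * m ! := by
  rw [hp.dvd_mul, hp.dvd_factorial, show 4 ^ k = 2 ^ (2 * k) by rw [pow_mul]; norm_num]
  rintro (h | h)
  · exact hodd ((prime_dvd_prime_iff_eq hp prime_two).mp (hp.dvd_of_dvd_pow h))
  · omega

theorem stmt1_general (p : ℕ) (hp : p.Prime) (hodd : p ≠ 2) (k : ℕ)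
    (hk2 : k ≤ (p - 1) / 2) :
    ratCongr p 4 (((p - 1) / 2 + k).choose (2 * k) : ℚ)
      (((2 * k).choose k : ℚ) / (-16 : ℚ) ^ k *
        (1 - (p : ℚ) ^ 2 * ∑ i ∈ Finset.Icc 1 k, 1 / (2 * (i : ℚ) - 1) ^ 2)) := by
  obtain ⟨n, rfl⟩ := hp.odd_of_ne_two hodd
  rw [show (2 * n + 1 - 1) / 2 = n by omega] at hk2 ⊢
  obtain ⟨E, hE⟩ := (Icc 1 k).sq_dvd_prod_add_sub_first_order ((2 * n + 1 : ℤ) ^ 2)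
    fun i => -(2 * (i : ℤ) - 1) ^ 2
  have hEQ : ∏ i ∈ Icc 1 k, ((2 * n + 1 : ℚ) ^ 2 + -(2 * i - 1) ^ 2)
      - ∏ i ∈ Icc 1 k, -(2 * (i : ℚ) - 1) ^ 2
      - (2 * n + 1 : ℚ) ^ 2
        * ∑ i ∈ Icc 1 k, ∏ j ∈ (Icc 1 k).erase i, -(2 * (j : ℚ) - 1) ^ 2
      = ((2 * n + 1 : ℚ) ^ 2) ^ 2 * E := by
    exact_mod_cast hE
  have hlhs : (4 ^ k * (2 * k)! : ℚ) * (n + k).choose (2 * k)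
      = ∏ i ∈ Icc 1 k, ((2 * n + 1 : ℚ) ^ 2 + -(2 * i - 1) ^ 2) := by
    have h := congrArg (Int.cast : ℤ → ℚ) (four_pow_mul_descFactorial_eq_prod_sq_sub_sq hk2)
    push_cast [Nat.descFactorial_eq_factorial_mul_choose] at h
    simp only [← sub_eq_add_neg, ← h]
    ring
  have hsum := (Icc 1 k).prod_mul_sum_inv (fun i => -(2 * (i : ℚ) - 1) ^ 2) fun i hi => by
    have : (1 : ℚ) ≤ i := by exact_mod_cast (mem_Icc.mp hi).1
    nlinarith
  simp only [inv_neg, sum_neg_distrib, mul_neg] at hsum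
  refine ratCongr_of_natCast_mul_sub_eq (4 ^ k * (2 * k)!)
    (hp.not_dvd_four_pow_mul_factorial hodd k (by omega)) E ?_
  push_cast
  simp only [one_div]
  linear_combination hlhs + hEQ
    - (1 - (2 * n + 1 : ℚ) ^ 2 * ∑ i ∈ Icc 1 k, ((2 * (i : ℚ) - 1) ^ 2)⁻¹)
      * four_pow_mul_factorial_mul_choose_div_neg_sixteen_pow k
    - (2 * n + 1 : ℚ) ^ 2 * hsum

theorem stmt1 (p : ℕ) (hp : p.Prime) (hodd : p ≠ 2) (k : ℕ) (hk1 : 1 ≤ k)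
    (hk2 : k ≤ (p - 1) / 2) :
    ratCongr p 4 (((p - 1) / 2 + k).choose (2 * k) : ℚ)
      (((2 * k).choose k : ℚ) / (-16 : ℚ) ^ k *
        (1 - (p : ℚ) ^ 2 * ∑ i ∈ Finset.Icc 1 k, 1 / (2 * (i : ℚ) - 1) ^ 2)) :=
  stmt1_general p hp hodd k hk2
end

section
/- Let p be an odd prime and k an integer with 1 \le k \le (p-1)/2. Then \binom{(p-1)/2}{k} \equiv \binom{2k}{k}/(-4)^k \cdot (1 - p \sum_{i=1}^{k} 1/(2i-1)) \pmod{p^2}, as a congruence between p-integral rationals. -/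
/-!
Write `p = 2m + 1`. Stepping `k` up by one gives the exact identity
`C(m, k) = C(2k, k) / (-4)^k * ∏_{i=1}^k (1 - p / (2i - 1))`.
All `1 / (2i - 1)` with `i ≤ m` and `C(2k, k) / (-4)^k` lie in the ring `ℤ_(p)` of
`p`-integral rationals, and there `∏ (1 - p b_i) ≡ 1 - p ∑ b_i` modulo `p^2`.
-/

open Finset

def pIntegralRat (p : ℕ) [Fact p.Prime] : Subring ℚ where
  carrier := {q | ¬ p ∣ q.den}
  zero_mem' := by simp [(Fact.out : p.Prime).ne_one]
  one_mem' := by simp [(Fact.out : p.Prime).ne_one]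
  neg_mem' := by simp
  add_mem' {a b} ha hb h :=
    ((Fact.out : p.Prime).dvd_mul.mp (h.trans (Rat.add_den_dvd a b))).elim ha hb
  mul_mem' {a b} ha hb h :=
    ((Fact.out : p.Prime).dvd_mul.mp (h.trans (Rat.mul_den_dvd a b))).elim ha hb

namespace pIntegralRat

variable {p : ℕ} [Fact p.Prime]

theorem mem_iff {q : ℚ} : q ∈ pIntegralRat p ↔ ¬ p ∣ q.den := Iff.rfl

theorem inv_natCast_mem {n : ℕ} (hn : ¬ p ∣ n) : (n : ℚ)⁻¹ ∈ pIntegralRat p := by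
  rw [mem_iff, Rat.inv_natCast_den]
  split_ifs <;> simp_all

theorem natCast_div_neg_four_pow_mem (hp : p ≠ 2) (n k : ℕ) :
    (n : ℚ) / (-4) ^ k ∈ pIntegralRat p := by
  have h4 : ¬ p ∣ 4 := fun h =>
    hp ((Nat.prime_dvd_prime_iff_eq Fact.out Nat.prime_two).mp
      ((Fact.out : p.Prime).dvd_of_dvd_pow (n := 2) h))
  rw [div_eq_mul_inv, ← inv_pow, show (-4 : ℚ)⁻¹ = -((4 : ℕ) : ℚ)⁻¹ by norm_num]
  exact mul_mem (natCast_mem _ n) (pow_mem (neg_mem (inv_natCast_mem h4)) k)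

end pIntegralRat

theorem Subring.exists_prod_one_sub_mul_sub_eq_sq_mul {R ι : Type*} [CommRing R]
    (S : Subring R) {x : R} (hx : x ∈ S) {b : ι → R} {s : Finset ι}
    (hb : ∀ i ∈ s, b i ∈ S) :
    ∃ c ∈ S, ∏ i ∈ s, (1 - x * b i) - (1 - x * ∑ i ∈ s, b i) = x ^ 2 * c := by
  classical
  induction s using Finset.induction_on with
  | empty => exact ⟨0, S.zero_mem, by simp⟩
  | insert j s hj ih =>
    have hbs : ∀ i ∈ s, b i ∈ S := fun i hi => hb i (mem_insert_of_mem hi)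
    have hbj := hb j (mem_insert_self j s)
    obtain ⟨c, hcS, hc⟩ := ih hbs
    refine ⟨c + b j * ∑ i ∈ s, b i - x * b j * c, ?_, ?_⟩
    · exact S.sub_mem (S.add_mem hcS (S.mul_mem hbj (S.sum_mem hbs)))
        (S.mul_mem (S.mul_mem hx hbj) hcS)
    · rw [prod_insert hj, sum_insert hj]
      linear_combination (1 - x * b j) * hc

theorem Nat.cast_choose_succ_right_mul (m k : ℕ) :
    (m.choose (k + 1) : ℚ) * (k + 1) = m.choose k * ((m : ℚ) - k) := by
  rcases le_or_gt k m with hkm | hmk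
  · have h := congrArg (Nat.cast : ℕ → ℚ) (Nat.choose_succ_right_eq m k)
    push_cast [hkm] at h
    exact h
  · simp [Nat.choose_eq_zero_of_lt hmk, Nat.choose_eq_zero_of_lt (hmk.trans k.lt_succ_self)]

theorem Nat.cast_choose_eq_centralBinom_div_mul_prod (m k : ℕ) :
    (m.choose k : ℚ) = ((2 * k).choose k : ℚ) / (-4 : ℚ) ^ k *
      ∏ i ∈ Icc 1 k, (1 - ((2 * m + 1 : ℕ) : ℚ) * (1 / (2 * (i : ℚ) - 1))) := by
  induction k with
  | zero => simp
  | succ k ih =>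
    have hk : (k : ℚ) + 1 ≠ 0 := by positivity
    have hchoose : (m.choose (k + 1) : ℚ) = m.choose k * ((m : ℚ) - k) / (k + 1) := by
      rw [eq_div_iff hk]
      exact Nat.cast_choose_succ_right_mul m k
    have hcentral : ((2 * (k + 1)).choose (k + 1) : ℚ)
        = 2 * (2 * k + 1) * (2 * k).choose k / (k + 1) := by
      rw [eq_div_iff hk, ← Nat.centralBinom_eq_two_mul_choose,
        ← Nat.centralBinom_eq_two_mul_choose]
      exact_mod_cast (mul_comm _ _).trans (Nat.succ_mul_centralBinom_succ k)
    have hfactor : 1 - ((2 * m + 1 : ℕ) : ℚ) * (1 / (2 * ((k + 1 : ℕ) : ℚ) - 1))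
        = 2 * ((k : ℚ) - m) / (2 * k + 1) := by
      have : 2 * (k : ℚ) + 1 ≠ 0 := by positivity
      push_cast
      rw [show 2 * ((k : ℚ) + 1) - 1 = 2 * k + 1 by ring]
      field_simp
      ring
    rw [prod_Icc_succ_top (by omega), hchoose, hcentral, ih, hfactor]
    field_simp
    ring

theorem stmt2_general (p : ℕ) (hp : p.Prime) (hodd : p ≠ 2) (k : ℕ)
    (hk2 : k ≤ (p - 1) / 2) :
    ratCongr p 2 (((p - 1) / 2).choose k : ℚ)
      (((2 * k).choose k : ℚ) / (-4 : ℚ) ^ k *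
        (1 - (p : ℚ) * ∑ i ∈ Finset.Icc 1 k, 1 / (2 * (i : ℚ) - 1))) := by
  have := Fact.mk hp
  obtain ⟨m, rfl⟩ := hp.odd_of_ne_two hodd
  rw [show (2 * m + 1 - 1) / 2 = m by omega] at hk2 ⊢
  have hb : ∀ i ∈ Icc 1 k, 1 / (2 * (i : ℚ) - 1) ∈ pIntegralRat (2 * m + 1) := by
    intro i hi
    have hi := mem_Icc.mp hi
    rw [one_div, show 2 * (i : ℚ) - 1 = ((2 * i - 1 : ℕ) : ℚ) by
      push_cast [Nat.cast_sub (by omega : 1 ≤ 2 * i)]; ring]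
    exact pIntegralRat.inv_natCast_mem (Nat.not_dvd_of_pos_of_lt (by omega) (by omega))
  obtain ⟨c, hcS, hc⟩ := (pIntegralRat (2 * m + 1)).exists_prod_one_sub_mul_sub_eq_sq_mul
    (natCast_mem _ (2 * m + 1)) hb
  refine ⟨((2 * k).choose k : ℚ) / (-4) ^ k * c, ?_,
    mul_mem (pIntegralRat.natCast_div_neg_four_pow_mem hodd _ k) hcS⟩
  rw [Nat.cast_choose_eq_centralBinom_div_mul_prod, ← mul_sub, hc]
  ring

theorem stmt2 (p : ℕ) (hp : p.Prime) (hodd : p ≠ 2) (k : ℕ) (hk1 : 1 ≤ k)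
    (hk2 : k ≤ (p - 1) / 2) :
    ratCongr p 2 (((p - 1) / 2).choose k : ℚ)
      (((2 * k).choose k : ℚ) / (-4 : ℚ) ^ k *
        (1 - (p : ℚ) * ∑ i ∈ Finset.Icc 1 k, 1 / (2 * (i : ℚ) - 1))) :=
  stmt2_general p hp hodd k hk2
end

section
/- Let p be an odd prime and k an integer with 1 \le k \le (p-1)/2. Then (-1)^k \binom{(p-1)/2+k}{k} / \binom{(p-1)/2}{k} \equiv 1 + 2p \sum_{i=1}^{k} 1/(2i-1) \pmod{p^2}, as a congruence between p-integral rationals. -/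
open Finset

section helpers
variable {p : ℕ}

lemma pden_add (hp : p.Prime) {a b : ℚ} (ha : ¬ p ∣ a.den) (hb : ¬ p ∣ b.den) :
    ¬ p ∣ (a + b).den := by
  intro h
  rcases (hp.dvd_mul.mp (h.trans (Rat.add_den_dvd a b))) with h' | h' <;> tauto

lemma pden_mul (hp : p.Prime) {a b : ℚ} (ha : ¬ p ∣ a.den) (hb : ¬ p ∣ b.den) :
    ¬ p ∣ (a * b).den := by
  intro h
  rcases (hp.dvd_mul.mp (h.trans (Rat.mul_den_dvd a b))) with h' | h' <;> tauto

lemma pden_int (hp : p.Prime) (z : ℤ) : ¬ p ∣ ((z : ℚ)).den := by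
  simp [hp.one_lt.ne']

lemma pden_denone (hp : p.Prime) {q : ℚ} (h : q.den = 1) : ¬ p ∣ q.den := by
  rw [h]; simpa using hp.one_lt.ne'

lemma pden_inv_int (hp : p.Prime) {z : ℤ} (hz : ¬ (p : ℤ) ∣ z) : ¬ p ∣ ((z : ℚ)⁻¹).den := by
  intro h
  apply hz
  have h1 : ((z : ℚ)⁻¹) = Rat.divInt 1 z := by
    rw [Rat.divInt_eq_div]; push_cast; rw [one_div]
  rw [h1] at h
  have h2 : (((Rat.divInt 1 z).den : ℤ)) ∣ z := Rat.den_dvd 1 z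
  have h3 : (p : ℤ) ∣ ((Rat.divInt 1 z).den : ℤ) := Int.natCast_dvd_natCast.mpr h
  exact h3.trans h2

lemma pden_sum (hp : p.Prime) (m : ℕ) (hpm : p = 2 * m + 1) :
    ∀ k, k ≤ m → ¬ p ∣ (∑ i ∈ Finset.Icc 1 k, 1 / (2 * (i : ℚ) - 1)).den := by
  intro k
  induction k with
  | zero => intro _; simpa using hp.one_lt.ne'
  | succ k ih =>
    intro hk
    rw [Finset.sum_Icc_succ_top (by omega : 1 ≤ k + 1)]
    apply pden_add hp (ih (by omega))
    have he : (1 / (2 * ((k + 1 : ℕ) : ℚ) - 1)) = (((2 * k + 1 : ℤ) : ℚ))⁻¹ := by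
      rw [one_div]; push_cast; ring_nf
    rw [he]
    apply pden_inv_int hp
    intro h
    have := Int.le_of_dvd (by positivity) h
    omega
end helpers

lemma aux (p : ℕ) (hp : p.Prime) (m : ℕ) (hpm : p = 2 * m + 1) :
    ∀ k, k ≤ m → ratCongr p 2 ((-1 : ℚ) ^ k * ((m + k).choose k : ℚ) / ((m.choose k : ℚ)))
      (1 + 2 * (p : ℚ) * ∑ i ∈ Finset.Icc 1 k, 1 / (2 * (i : ℚ) - 1)) := by
  intro k
  induction k with
  | zero =>
    intro _
    exact ⟨0, by norm_num, by simpa using hp.one_lt.ne'⟩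
  | succ k ih =>
    intro hk
    obtain ⟨c, hc, hcden⟩ := ih (by omega)
    set S : ℚ := ∑ i ∈ Finset.Icc 1 k, 1 / (2 * (i : ℚ) - 1) with hS
    set A : ℤ := 2 * k + 1 with hA
    set B : ℤ := 2 * k + 1 - p with hB
    have hAdvd : ¬ (p : ℤ) ∣ A := by
      intro h
      have := Int.le_of_dvd (by positivity) h
      omega
    have hBdvd : ¬ (p : ℤ) ∣ B := by
      intro h
      have h2 : (p : ℤ) ∣ B + p := h.add (dvd_refl _)
      have h3 : B + (p : ℤ) = A := by omega
      rw [h3] at h2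
      exact hAdvd h2
    have haq : ((A : ℤ) : ℚ) = 2 * (k : ℚ) + 1 := by rw [hA]; push_cast; ring
    have hbq : ((B : ℤ) : ℚ) = 2 * (k : ℚ) + 1 - (p : ℚ) := by rw [hB]; push_cast; ring
    have hpq : (p : ℚ) = 2 * (m : ℚ) + 1 := by rw [hpm]; push_cast; ring
    have haq0 : ((A : ℤ) : ℚ) ≠ 0 := by rw [haq]; positivity
    have hbq0 : ((B : ℤ) : ℚ) ≠ 0 := by
      rw [hbq, hpq]
      intro h
      have : (k : ℚ) = (m : ℚ) := by linarith
      have : k = m := by exact_mod_cast this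
      omega
    -- choose facts
    have hkm : k < m := hk
    have hDold : ((m.choose k : ℚ)) ≠ 0 :=
      Nat.cast_ne_zero.mpr (Nat.choose_pos (by omega)).ne'
    have hDnew : ((m.choose (k + 1) : ℚ)) ≠ 0 :=
      Nat.cast_ne_zero.mpr (Nat.choose_pos (by omega)).ne'
    have h1 : (((m + k + 1).choose (k + 1) : ℚ)) * (k + 1) = (m + k + 1) * ((m + k).choose k) := by
      have := Nat.add_one_mul_choose_eq (m + k) k
      have h1' : ((m + k + 1).choose (k + 1)) * (k + 1) = (m + k + 1) * ((m + k).choose k) :=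
        (Nat.add_one_mul_choose_eq (m + k) k).symm
      exact_mod_cast h1'
    have h2 : ((m.choose (k + 1) : ℚ)) * (k + 1) = ((m.choose k : ℚ)) * ((m : ℚ) - k) := by
      have h2' : (m.choose (k + 1)) * (k + 1) = (m.choose k) * (m - k) := Nat.choose_succ_right_eq m k
      have : ((m.choose (k + 1) : ℚ)) * (k + 1) = ((m.choose k : ℚ)) * (((m - k : ℕ)) : ℚ) := by
        exact_mod_cast h2'
      rw [this, Nat.cast_sub (by omega)]
    have hk1 : ((k : ℚ) + 1) ≠ 0 := by positivity
    have hmk : ((m : ℚ) - k) ≠ 0 := by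
      intro h
      have : (m : ℚ) = (k : ℚ) := by linarith
      have : m = k := by exact_mod_cast this
      omega
    -- the recurrence for F
    have hF : (-1 : ℚ) ^ (k + 1) * (((m + (k + 1)).choose (k + 1) : ℚ)) / ((m.choose (k + 1) : ℚ))
        = ((-1 : ℚ) ^ k * ((m + k).choose k : ℚ) / ((m.choose k : ℚ)))
          * ((((A : ℤ) : ℚ) + p) / ((B : ℤ) : ℚ)) := by
      have hch : ((m + (k + 1)).choose (k + 1) : ℚ) = ((m + k + 1).choose (k + 1) : ℚ) := by
        norm_num [add_assoc]
      rw [hch, haq, hbq, hpq]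
      have hd : 2 * (k : ℚ) + 1 - (2 * (m : ℚ) + 1) ≠ 0 := by
        intro h
        have : (k : ℚ) = (m : ℚ) := by linarith
        have : k = m := by exact_mod_cast this
        omega
      rw [div_mul_div_comm, div_eq_div_iff hDnew (mul_ne_zero hDold hd)]
      have key : (-1 : ℚ) ^ (k + 1) * (((m + k + 1).choose (k + 1) : ℚ))
            * (((m.choose k : ℚ)) * (2 * (k : ℚ) + 1 - (2 * (m : ℚ) + 1))) * ((k : ℚ) + 1)
          = ((-1 : ℚ) ^ k * ((m + k).choose k : ℚ) * (2 * (k : ℚ) + 1 + (2 * (m : ℚ) + 1)))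
            * ((m.choose (k + 1) : ℚ)) * ((k : ℚ) + 1) := by
        linear_combination ((-1 : ℚ) ^ k * ((m.choose k : ℚ))
            * (2 * (m : ℚ) - 2 * (k : ℚ))) * h1
          - ((-1 : ℚ) ^ k * ((m + k).choose k : ℚ)
            * (2 * (k : ℚ) + 2 * (m : ℚ) + 2)) * h2
      exact mul_right_cancel₀ hk1 key
    -- the sum recurrence
    have hsum : (∑ i ∈ Finset.Icc 1 (k + 1), 1 / (2 * (i : ℚ) - 1)) = S + (((A : ℤ) : ℚ))⁻¹ := by
      rw [Finset.sum_Icc_succ_top (by omega : 1 ≤ k + 1), hS, haq]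
      push_cast
      rw [show (2 * ((k : ℚ) + 1) - 1) = 2 * (k : ℚ) + 1 by ring, one_div]
    refine ⟨c * ((((A : ℤ) : ℚ) + p) * (((B : ℤ) : ℚ))⁻¹)
      + (2 * (2 * ((A : ℤ) : ℚ) * S + 1)) * ((((A : ℤ) : ℚ))⁻¹ * (((B : ℤ) : ℚ))⁻¹), ?_, ?_⟩
    · rw [hF, hsum]
      have hFk : (-1 : ℚ) ^ k * ((m + k).choose k : ℚ) / ((m.choose k : ℚ))
          = (1 + 2 * (p : ℚ) * S) + (p : ℚ) ^ 2 * c := by linarith [hc]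
      rw [hFk, hbq]
      have hb0 : 2 * (k : ℚ) + 1 - (p : ℚ) ≠ 0 := by rw [← hbq]; exact hbq0
      rw [haq]
      have ha0 : 2 * (k : ℚ) + 1 ≠ 0 := by positivity
      field_simp
      ring
    · apply pden_add hp
      · exact pden_mul hp hcden (pden_mul hp
          (by rw [← Int.cast_natCast (R := ℚ) p, ← Int.cast_add]; exact pden_int hp _)
          (pden_inv_int hp hBdvd))
      · apply pden_mul hp
        · apply pden_mul hp (pden_denone hp rfl)
          apply pden_add hp _ (pden_denone hp rfl)
          exact pden_mul hp (pden_mul hp (pden_denone hp rfl) (pden_int hp A))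
            (pden_sum hp m hpm k (by omega))
        · exact pden_mul hp (pden_inv_int hp hAdvd) (pden_inv_int hp hBdvd)

theorem stmt3 (p : ℕ) (hp : p.Prime) (hodd : p ≠ 2) (k : ℕ) (hk1 : 1 ≤ k)
    (hk2 : k ≤ (p - 1) / 2) :
    ratCongr p 2 ((-1 : ℚ) ^ k * (((p - 1) / 2 + k).choose k : ℚ) / (((p - 1) / 2).choose k : ℚ))
      (1 + 2 * (p : ℚ) * ∑ i ∈ Finset.Icc 1 k, 1 / (2 * (i : ℚ) - 1)) := by
  have hpodd : p % 2 = 1 := hp.eq_two_or_odd.resolve_left hodd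
  have hp2 : 2 ≤ p := hp.two_le
  exact aux p hp ((p - 1) / 2) (by omega) k hk2
end

section
/- Let p be an odd prime and x a rational p-integer. Then \sum_{k=0}^{p-1} \binom{2k}{k}^2 / 16^k \cdot (x^k - (-1)^{(p-1)/2} (1-x)^k) \equiv 0 \pmod{p^2}. -/
/-!
Let `n = (p - 1) / 2`. For `k ≤ n` the consecutive ratios of `aₖ = C(2k,k)²` and
`bₖ = (-16)ᵏ C(n,k) C(n+k,k)` are `4(2k+1)²/(k+1)²` and `4((2k+1)² - p²)/(k+1)²`, so
`aₖ ≡ bₖ (mod p²)`; for `n < k < p` the prime `p` divides `C(2k,k)`. Hence the sum is congruent to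
`L(-x) - (-1)ⁿ L(x - 1)` with `L(z) = ∑ C(n,k) C(n+k,k) zᵏ = Pₙ(1 + 2z)`, which vanishes by the
reflection `Pₙ(-t) = (-1)ⁿ Pₙ(t)` of the Legendre polynomial. The congruence is proved in the ring
of `p`-integral rationals, where `16` is invertible.
-/

open Finset

section Legendre

variable {R : Type*}

-- `legendreSum n z = Pₙ(1 + 2z)` for the Legendre polynomial `Pₙ`.
def legendreSum [Semiring R] (n : ℕ) (z : R) : R :=
  ∑ k ∈ range (n + 1), (n.choose k * (n + k).choose k : ℕ) * z ^ k

theorem Nat.sum_range_choose_mul_choose (n m : ℕ) :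
    ∑ k ∈ range (m + 1), n.choose k * m.choose k = (n + m).choose m := by
  rw [Nat.add_choose_eq, Nat.sum_antidiagonal_eq_sum_range_succ_mk]
  refine sum_congr rfl fun k hk => ?_
  rw [Nat.choose_symm (by simpa [Nat.lt_succ_iff] using hk)]

theorem legendreSum_eq_sum_choose_sq [CommSemiring R] (n : ℕ) (z : R) :
    legendreSum n z =
      ∑ k ∈ range (n + 1), (n.choose k ^ 2 : ℕ) * z ^ k * (1 + z) ^ (n - k) := by
  have expand : ∀ k ∈ range (n + 1), ((n.choose k ^ 2 : ℕ) : R) * z ^ k * (1 + z) ^ (n - k)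
      = ∑ m ∈ Ico k (n + 1), (n.choose k ^ 2 * (n - k).choose (m - k) : ℕ) * z ^ m := by
    intro k hk
    rw [sum_Ico_eq_sum_range, add_comm 1 z, add_pow, mul_sum,
      show n + 1 - k = n - k + 1 by have := mem_range.mp hk; omega]
    refine sum_congr rfl fun i _ => ?_
    rw [Nat.add_sub_cancel_left, pow_add]
    push_cast
    ring
  have regroup : ∀ m ∈ range (n + 1), ∑ k ∈ range (m + 1),
      ((n.choose k ^ 2 * (n - k).choose (m - k) : ℕ) : R) * z ^ m
      = (n.choose m * (n + m).choose m : ℕ) * z ^ m := by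
    intro m hm
    rw [← sum_mul, ← Nat.cast_sum, ← Nat.sum_range_choose_mul_choose, mul_sum]
    refine congrArg (fun t : ℕ => (t : R) * z ^ m) (sum_congr rfl fun k hk => ?_)
    rw [sq, mul_assoc, ← Nat.choose_mul (n := n) (by simpa [Nat.lt_succ_iff] using hk)]
    ring
  rw [sum_congr rfl expand, sum_comm' (t' := range (n + 1)) (s' := fun m => range (m + 1)),
    sum_congr rfl regroup, legendreSum]
  intro k m
  simp only [mem_range, mem_Ico]
  omega

theorem legendreSum_neg_one_sub [CommRing R] (n : ℕ) (z : R) :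
    legendreSum n (-1 - z) = (-1) ^ n * legendreSum n z := by
  rw [legendreSum_eq_sum_choose_sq, legendreSum_eq_sum_choose_sq, ← sum_range_reflect, mul_sum]
  refine sum_congr rfl fun k hk => ?_
  have hk : k ≤ n := by simpa [Nat.lt_succ_iff] using hk
  rw [Nat.add_sub_cancel, Nat.choose_symm hk, Nat.sub_sub_self hk,
    show (-1 - z) = (-1) * (1 + z) by ring, show 1 + (-1) * (1 + z) = (-1) * z by ring,
    mul_pow, mul_pow,
    show (-1 : R) ^ n = (-1) ^ (n - k) * (-1) ^ k by rw [← pow_add, Nat.sub_add_cancel hk]]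
  ring

end Legendre

theorem sq_dvd_centralBinom_sq_sub {p n k : ℕ} (hp : p.Prime) (hn : 2 * n + 1 = p)
    (hk : k ≤ n) :
    (p : ℤ) ^ 2 ∣ (k.centralBinom : ℤ) ^ 2 - (-16) ^ k * (n.choose k * (n + k).choose k : ℕ) := by
  induction k with
  | zero => simp
  | succ k ih =>
    obtain ⟨c, hc⟩ := ih (by omega)
    have hcentral : ((k : ℤ) + 1) ^ 2 * (k + 1).centralBinom ^ 2
        = 4 * (2 * k + 1) ^ 2 * k.centralBinom ^ 2 := by
      have h : ((k : ℤ) + 1) * (k + 1).centralBinom = 2 * (2 * k + 1) * k.centralBinom := by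
        exact_mod_cast Nat.succ_mul_centralBinom_succ k
      linear_combination
        (((k : ℤ) + 1) * (k + 1).centralBinom + 2 * (2 * k + 1) * k.centralBinom) * h
    have hchoose : ((k : ℤ) + 1) ^ 2
          * ((-16) ^ (k + 1) * (n.choose (k + 1) * (n + (k + 1)).choose (k + 1) : ℕ))
        = 4 * ((2 * k + 1) ^ 2 - p ^ 2) * ((-16) ^ k * (n.choose k * (n + k).choose k : ℕ)) := by
      have hlow : (n.choose (k + 1) : ℤ) * (k + 1) = n.choose k * (n - k) := by
        rw [← Nat.cast_sub (by omega)]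
        exact_mod_cast Nat.choose_succ_right_eq n k
      have hhigh : ((n : ℤ) + k + 1) * (n + k).choose k
          = (n + (k + 1)).choose (k + 1) * (k + 1) := by
        exact_mod_cast Nat.add_one_mul_choose_eq (n + k) k
      have hpn : (p : ℤ) = 2 * n + 1 := by exact_mod_cast hn.symm
      push_cast
      linear_combination (-16) ^ (k + 1) * ((n + (k + 1)).choose (k + 1) * (k + 1) * hlow
          + n.choose k * (n - k) * hhigh.symm)
        + 4 * (-16) ^ k * (n.choose k * (n + k).choose k) * ((p : ℤ) + 2 * n + 1) * hpn
    have hcop : IsCoprime (p : ℤ) ((k : ℤ) + 1) := by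
      exact_mod_cast Nat.isCoprime_iff_coprime.mpr
        (Nat.coprime_of_lt_prime (n := k + 1) (by omega) (by omega) hp)
    refine (hcop.pow (m := 2) (n := 2)).dvd_of_dvd_mul_left
      ⟨4 * (2 * k + 1) ^ 2 * c + 4 * (-16) ^ k * (n.choose k * (n + k).choose k : ℕ), ?_⟩
    linear_combination hcentral - hchoose + 4 * (2 * k + 1) ^ 2 * hc

theorem sq_dvd_sum_centralBinom_sq_mul {R : Type*} [CommRing R] {p n : ℕ} (hp : p.Prime)
    (hn : 2 * n + 1 = p) (u X : R) (hu : 16 * u = 1) :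
    (p : R) ^ 2 ∣ ∑ k ∈ range p,
      (k.centralBinom ^ 2 : ℕ) * u ^ k * (X ^ k - (-1) ^ n * (1 - X) ^ k) := by
  rw [← sum_range_add_sum_Ico _ (show n + 1 ≤ p by omega)]
  refine dvd_add ?_ (dvd_sum fun k hk => ?_)
  · have hterm : ∀ k ∈ range (n + 1),
        (k.centralBinom ^ 2 : ℕ) * u ^ k * (X ^ k - (-1) ^ n * (1 - X) ^ k : R)
        = ((k.centralBinom ^ 2 - (-16) ^ k * (n.choose k * (n + k).choose k : ℕ) : ℤ) : R)
            * u ^ k * (X ^ k - (-1) ^ n * (1 - X) ^ k)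
          + ((n.choose k * (n + k).choose k : ℕ) * (-X) ^ k
            - (-1) ^ n * ((n.choose k * (n + k).choose k : ℕ) * (X - 1) ^ k)) := by
      intro k _
      have hsign : u ^ k * (-16) ^ k = (-1 : R) ^ k := by
        rw [← mul_pow, show u * -16 = -1 by linear_combination -hu]
      rw [neg_pow X, show X - 1 = (-1) * (1 - X) by ring, mul_pow]
      push_cast
      linear_combination
        (n.choose k : R) * (n + k).choose k * (X ^ k - (-1) ^ n * (1 - X) ^ k) * hsign
    have reflect : legendreSum n (-X) = (-1) ^ n * legendreSum n (X - 1) := by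
      rw [← legendreSum_neg_one_sub]
      congr 1
      ring
    rw [sum_congr rfl hterm, sum_add_distrib, sum_sub_distrib, ← mul_sum]
    change _ ∣ _ + (legendreSum n (-X) - (-1) ^ n * legendreSum n (X - 1))
    rw [reflect, sub_self, add_zero]
    refine dvd_sum fun k hk => Dvd.dvd.mul_right (Dvd.dvd.mul_right ?_ _) _
    have h := Int.cast_dvd_cast (α := R) _ _
      (sq_dvd_centralBinom_sq_sub hp hn (Nat.lt_succ_iff.mp (mem_range.mp hk)))
    push_cast at h ⊢
    exact h
  · obtain ⟨hnk, hkp⟩ := mem_Ico.mp hk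
    have hdvd : p ∣ k.centralBinom := by
      rw [Nat.centralBinom_eq_two_mul_choose, two_mul]
      exact hp.dvd_choose_add hkp hkp (by omega)
    refine Dvd.dvd.mul_right (Dvd.dvd.mul_right ?_ _) _
    exact_mod_cast Nat.cast_dvd_cast (pow_dvd_pow_of_dvd hdvd 2)

theorem ratCongr_of_dvd_sub {p k : ℕ} [Fact p.Prime] {a b : (Rat.padicValuation p).integer}
    (h : (p : (Rat.padicValuation p).integer) ^ k ∣ a - b) : ratCongr p k a b := by
  obtain ⟨c, hc⟩ := h
  exact ⟨c, by simpa using congrArg (fun z : (Rat.padicValuation p).integer => (z : ℚ)) hc,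
    Rat.padicValuation_le_one_iff.mp c.2⟩

theorem stmt5 (p : ℕ) (hp : p.Prime) (hodd : p ≠ 2) (x : ℚ) (hx : ¬ (p ∣ x.den)) :
    ratCongr p 2
      (∑ k ∈ Finset.range p,
        ((2 * k).choose k : ℚ) ^ 2 / 16 ^ k *
          (x ^ k - (-1 : ℚ) ^ ((p - 1) / 2) * (1 - x) ^ k)) 0 := by
  have := Fact.mk hp
  obtain ⟨n, hn⟩ := hp.odd_of_ne_two hodd
  have hhalf : (p - 1) / 2 = n := by omega
  have h16 : ¬ p ∣ (1 / 16 : ℚ).den := by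
    simpa using fun h : p ∣ 2 ^ 4 =>
      hodd ((Nat.prime_dvd_prime_iff_eq hp Nat.prime_two).mp (hp.dvd_of_dvd_pow h))
  have key := sq_dvd_sum_centralBinom_sq_mul hp hn.symm
    (⟨1 / 16, Rat.padicValuation_le_one_iff.mpr h16⟩ : (Rat.padicValuation p).integer)
    ⟨x, Rat.padicValuation_le_one_iff.mpr hx⟩
    (Subtype.ext (by show (16 : ℚ) * (1 / 16) = 1; norm_num))
  rw [← sub_zero (∑ k ∈ range p, _)] at key
  convert ratCongr_of_dvd_sub key using 1
  · push_cast
    simp [hhalf, Nat.centralBinom_eq_two_mul_choose, div_eq_mul_inv]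
  · rfl
end

section
/- Let p be an odd prime and r an integer with 1 \le r \le (p-1)/2. If p + 1 - 2r \equiv 0 (mod 4), then \sum_{k=0}^{(p-1)/2} \binom{2k}{k}^2 / 32^k \cdot k(k-1)\cdots(k-r+1) \equiv 0 \pmod{p^2}. If p - 1 - 2r \equiv 0 (mod 4), then this sum is congruent to (-1)^{(p-1+2r)/4} 2^{-(p-1)/2} ((p-1)/2 + r)! / ( ((p-1-2r)/4)! \cdot ((p-1+2r)/4)! ) mod p^2. -/
/-
Write `p = 2(ν + r) + 1`. Only the terms `k = r + N`, `N ≤ ν`, survive, and in Pochhammer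
notation such a term is `(1/2)_r² / (2^r r!) · (r + 1/2)_N² / ((r + 1)_N N! 2^N)`. As
`r + 1/2 = -ν + p/2` and `(x + p/2)² = x (x + p) + p²/4`, the square `(r + 1/2)_N²` is congruent
mod `p²` to `(-ν)_N (ν + 2r + 1)_N`. So the sum is congruent to `(1/2)_r² / (2^r r!)` times the
terminating series `₂F₁(-ν, ν + 2r + 1; r + 1; 1/2)`, which Gauss's second summation theorem
evaluates: it vanishes for odd `ν` and equals `(-1)^J (1/2)_J / (r + 1)_J` for `ν = 2J`. Gauss's
theorem follows from a three-term recurrence in `ν`, obtained by telescoping a contiguous relation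
between the terms. For `ν = 2J`, pairing the factors of `(2J + 1)_{2r}` symmetrically about `p/2`
gives `(2J + 1)_{2r} ≡ (-1)^r (1/2)_r² (mod p²)`, which turns the closed form into the factorials
of the statement.
-/

open Finset

open Polynomial Nat

section Pochhammer

variable {R : Type*} [CommSemiring R]

theorem ascPochhammer_succ_eval_left (x : R) (n : ℕ) :
    (ascPochhammer R (n + 1)).eval x = x * (ascPochhammer R n).eval (x + 1) := by
  simp [ascPochhammer_succ_left]

theorem ascPochhammer_eval_eq_prod_range (x : R) (n : ℕ) :
    (ascPochhammer R n).eval x = ∏ i ∈ range n, (x + i) := by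
  induction n with
  | zero => simp
  | succ n ih => rw [ascPochhammer_succ_eval, ih, prod_range_succ]

theorem ascPochhammer_eval_add (x : R) (m n : ℕ) :
    (ascPochhammer R (m + n)).eval x =
      (ascPochhammer R m).eval x * (ascPochhammer R n).eval (x + m) := by
  simp only [ascPochhammer_eval_eq_prod_range, prod_range_add, Nat.cast_add, add_assoc]

theorem four_pow_mul_factorial_mul_ascPochhammer_half {K : Type*} [Field K] [CharZero K] (k : ℕ) :
    4 ^ k * k ! * (ascPochhammer K k).eval 2⁻¹ = (2 * k)! := by
  induction k with
  | zero => simp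
  | succ k ih =>
    rw [ascPochhammer_succ_eval, show 2 * (k + 1) = 2 * k + 1 + 1 by ring, factorial_succ,
      factorial_succ, factorial_succ]
    push_cast
    rw [← ih]
    ring

theorem ascPochhammer_eval_sub_add_half {K : Type*} [Field K] [CharZero K] (y : K) (r : ℕ) :
    (ascPochhammer K (2 * r)).eval (y - r + 2⁻¹) = ∏ j ∈ range r, (y ^ 2 - (j + 2⁻¹) ^ 2) := by
  induction r with
  | zero => simp
  | succ r ih =>
    rw [show 2 * (r + 1) = 2 * r + 1 + 1 by ring, ascPochhammer_succ_eval_left,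
      ascPochhammer_succ_eval, prod_range_succ, ← ih]
    push_cast
    rw [show y - (r + 1) + 2⁻¹ + 1 = y - r + 2⁻¹ by ring]
    ring

end Pochhammer

theorem choose_two_mul_sq_div_mul_descFactorial (r N : ℕ) :
    ((2 * (r + N)).choose (r + N) : ℚ) ^ 2 / 32 ^ (r + N) * (r + N).descFactorial r =
      (ascPochhammer ℚ r).eval 2⁻¹ ^ 2 / (2 ^ r * r !) *
        ((ascPochhammer ℚ N).eval ((r : ℚ) + 2⁻¹) ^ 2 /
          ((ascPochhammer ℚ N).eval (r + 1 : ℚ) * N ! * 2 ^ N)) := by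
  have hchoose : ((2 * (r + N)).choose (r + N) : ℚ) =
      4 ^ (r + N) * (ascPochhammer ℚ (r + N)).eval 2⁻¹ / (r + N)! := by
    rw [Nat.cast_choose ℚ (by omega), show 2 * (r + N) - (r + N) = r + N by omega,
      ← four_pow_mul_factorial_mul_ascPochhammer_half]
    field_simp
  have hdesc : ((r + N).descFactorial r : ℚ) = (r + N)! / N ! := by
    have h := factorial_mul_descFactorial (Nat.le_add_right r N)
    rw [Nat.add_sub_cancel_left] at h
    rw [eq_div_iff (by positivity), mul_comm]
    exact_mod_cast h
  have hhalf := ascPochhammer_eval_add (2⁻¹ : ℚ) r N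
  have hfac : ((r + N)! : ℚ) = r ! * (ascPochhammer ℚ N).eval ((r : ℚ) + 1) := by
    exact_mod_cast (factorial_mul_ascPochhammer ℚ r N).symm
  have hpos : (ascPochhammer ℚ N).eval ((r : ℚ) + 1) ≠ 0 :=
    (ascPochhammer_pos N _ (by positivity)).ne'
  have h32 : (32 : ℚ) ^ (r + N) = 2 ^ (r + N) * (4 ^ (r + N)) ^ 2 := by
    rw [← pow_mul, mul_comm (r + N), pow_mul, ← mul_pow]
    norm_num
  rw [hchoose, hdesc, hhalf, hfac, h32, add_comm (2⁻¹ : ℚ)]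
  field_simp
  ring

-- The `N`-th term of the terminating series `₂F₁(-x, x + 2c - 1; c; 1/2)`.
noncomputable def hypergeomTerm (c x : ℚ) (N : ℕ) : ℚ :=
  (ascPochhammer ℚ N).eval (-x) * (ascPochhammer ℚ N).eval (x + 2 * c - 1) /
    ((ascPochhammer ℚ N).eval c * N ! * 2 ^ N)

noncomputable def hypergeomSum (c : ℚ) (m : ℕ) : ℚ := ∑ N ∈ range (m + 1), hypergeomTerm c m N

section Gauss

variable {c : ℚ}

@[simp]
theorem hypergeomTerm_zero (c x : ℚ) : hypergeomTerm c x 0 = 1 := by simp [hypergeomTerm]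

theorem hypergeomTerm_natCast_of_lt (c : ℚ) {m N : ℕ} (h : m < N) : hypergeomTerm c m N = 0 := by
  simp [hypergeomTerm, ascPochhammer_eval_neg_coe_nat_of_lt h]

theorem hypergeomTerm_contiguous (hc : 0 < c) (x : ℚ) (N : ℕ) :
    (x + 2 * c) * hypergeomTerm c (x + 2) (N + 1) + (x + 1) * hypergeomTerm c x (N + 1)
      + (2 * x + 2 * c + 1) * hypergeomTerm c (x + 1) N
      = (2 * x + 2 * c + 1) * hypergeomTerm c (x + 1) (N + 1) := by
  set a := (ascPochhammer ℚ N).eval (-x - 1)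
  set a' := (ascPochhammer ℚ N).eval (-x)
  set b := (ascPochhammer ℚ N).eval (x + 2 * c)
  set b' := (ascPochhammer ℚ N).eval (x + 2 * c + 1)
  have ha : (-x - 1) * a' = a * (-x - 1 + N) := by
    rw [← ascPochhammer_succ_eval, ascPochhammer_succ_eval_left, sub_add_cancel]
  have hb : (x + 2 * c) * b' = b * (x + 2 * c + N) := by
    rw [← ascPochhammer_succ_eval, ascPochhammer_succ_eval_left]
  have hcN : (ascPochhammer ℚ N).eval c ≠ 0 := (ascPochhammer_pos N c hc).ne'
  have hcN' : c + N ≠ 0 := by positivity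
  simp only [hypergeomTerm, ascPochhammer_succ_eval_left (-(x + 2)),
    ascPochhammer_succ_eval_left (x + 2 * c - 1)]
  simp only [ascPochhammer_succ_eval N, factorial_succ, pow_succ, cast_mul, cast_succ,
    show -(x + 2) + 1 = -x - 1 by ring, show x + 2 + 2 * c - 1 = x + 2 * c + 1 by ring,
    show x + 2 * c - 1 + 1 = x + 2 * c by ring, show -(x + 1) = -x - 1 by ring,
    show x + 1 + 2 * c - 1 = x + 2 * c by ring]
  field_simp
  linear_combination (-(x + 2) * a * (x + 2 * c + 1 + N)) * hb
    - ((N - x) * (x + 2 * c - 1) * b) * ha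

theorem hypergeomSum_recurrence (hc : 0 < c) (m : ℕ) :
    (m + 2 * c) * hypergeomSum c (m + 2) + (m + 1) * hypergeomSum c m = 0 := by
  have hm : hypergeomSum c m = ∑ N ∈ range (m + 3), hypergeomTerm c m N :=
    sum_subset (range_subset_range.2 (by omega)) fun N _ hN =>
      hypergeomTerm_natCast_of_lt c (by simp only [mem_range] at hN; omega)
  have htelescope (N : ℕ) :
      (m + 2 * c) * hypergeomTerm c (m + 2) (N + 1) + (m + 1) * hypergeomTerm c m (N + 1) =
        (2 * m + 2 * c + 1) * (hypergeomTerm c (m + 1) (N + 1) - hypergeomTerm c (m + 1) N) := by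
    linear_combination hypergeomTerm_contiguous hc m N
  have hlast : hypergeomTerm c (m + 1) (m + 2) = 0 := by
    exact_mod_cast hypergeomTerm_natCast_of_lt c (m := m + 1) (by omega)
  rw [hypergeomSum, hm, Nat.cast_add, Nat.cast_two, mul_sum, mul_sum, ← sum_add_distrib,
    sum_range_succ']
  simp only [htelescope]
  rw [← mul_sum, sum_range_sub (hypergeomTerm c (m + 1)), hlast]
  simp only [hypergeomTerm_zero]
  ring

theorem hypergeomSum_two_mul (hc : 0 < c) (J : ℕ) :
    hypergeomSum c (2 * J) =
      (-1) ^ J * (ascPochhammer ℚ J).eval 2⁻¹ / (ascPochhammer ℚ J).eval c := by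
  induction J with
  | zero => simp [hypergeomSum]
  | succ J ih =>
    have hJc : (2 * J + 2 * c : ℚ) ≠ 0 := by positivity
    have hstep : hypergeomSum c (2 * J + 2) =
        -(2 * J + 1) / (2 * J + 2 * c) * hypergeomSum c (2 * J) := by
      have h := hypergeomSum_recurrence hc (2 * J)
      push_cast at h
      field_simp
      linear_combination h
    have hcJ : (ascPochhammer ℚ J).eval c ≠ 0 := (ascPochhammer_pos J c hc).ne'
    rw [show 2 * (J + 1) = 2 * J + 2 by ring, hstep, ih, ascPochhammer_succ_eval,
      ascPochhammer_succ_eval]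
    field_simp
    ring

theorem hypergeomSum_two_mul_add_one (hc : 0 < c) (J : ℕ) : hypergeomSum c (2 * J + 1) = 0 := by
  induction J with
  | zero =>
    simp [hypergeomSum, sum_range_succ, hypergeomTerm, mul_comm c, hc.ne']
  | succ J ih =>
    have h := hypergeomSum_recurrence hc (2 * J + 1)
    rw [ih, mul_zero, add_zero] at h
    rw [show 2 * (J + 1) + 1 = 2 * J + 1 + 2 by ring]
    exact (mul_eq_zero.1 h).resolve_left (by positivity)

end Gauss

section Congruence

variable {p : ℕ} [Fact p.Prime] {k : ℕ} {a b c d : ℚ}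

local notation "ℤ_(" p ")" => Valuation.integer (Rat.padicValuation p)

theorem ratCongr_iff : ratCongr p k a b ↔ ∃ c ∈ ℤ_(p), a - b = (p : ℚ) ^ k * c := by
  simp only [ratCongr, Valuation.mem_integer_iff, Rat.padicValuation_le_one_iff, and_comm]

theorem ratCongr.refl (a : ℚ) : ratCongr p k a a :=
  ratCongr_iff.2 ⟨0, zero_mem _, by ring⟩

theorem ratCongr.trans (h₁ : ratCongr p k a b) (h₂ : ratCongr p k b c) : ratCongr p k a c := by
  obtain ⟨x, hx, hab⟩ := ratCongr_iff.1 h₁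
  obtain ⟨y, hy, hbc⟩ := ratCongr_iff.1 h₂
  exact ratCongr_iff.2 ⟨x + y, add_mem hx hy, by linear_combination hab + hbc⟩

theorem ratCongr.add (h₁ : ratCongr p k a b) (h₂ : ratCongr p k c d) :
    ratCongr p k (a + c) (b + d) := by
  obtain ⟨x, hx, hab⟩ := ratCongr_iff.1 h₁
  obtain ⟨y, hy, hcd⟩ := ratCongr_iff.1 h₂
  exact ratCongr_iff.2 ⟨x + y, add_mem hx hy, by linear_combination hab + hcd⟩

theorem ratCongr.mul_left (hc : c ∈ ℤ_(p)) (h : ratCongr p k a b) :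
    ratCongr p k (c * a) (c * b) := by
  obtain ⟨x, hx, hab⟩ := ratCongr_iff.1 h
  exact ratCongr_iff.2 ⟨c * x, mul_mem hc hx, by linear_combination c * hab⟩

theorem ratCongr.mul (ha : a ∈ ℤ_(p)) (hd : d ∈ ℤ_(p)) (h₁ : ratCongr p k a b)
    (h₂ : ratCongr p k c d) :
    ratCongr p k (a * c) (b * d) := by
  obtain ⟨x, hx, hab⟩ := ratCongr_iff.1 h₁
  obtain ⟨y, hy, hcd⟩ := ratCongr_iff.1 h₂
  exact ratCongr_iff.2 ⟨a * y + d * x, add_mem (mul_mem ha hy) (mul_mem hd hx), by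
    linear_combination a * hcd + d * hab⟩

theorem ratCongr_sum {ι : Type*} {s : Finset ι} {f g : ι → ℚ}
    (h : ∀ i ∈ s, ratCongr p k (f i) (g i)) : ratCongr p k (∑ i ∈ s, f i) (∑ i ∈ s, g i) := by
  classical
  induction s using Finset.induction_on with
  | empty => exact ratCongr.refl 0
  | insert i s hi ih =>
    rw [forall_mem_insert] at h
    rw [sum_insert hi, sum_insert hi]
    exact h.1.add (ih h.2)

theorem ratCongr_prod {ι : Type*} {s : Finset ι} {f g : ι → ℚ} (hf : ∀ i ∈ s, f i ∈ ℤ_(p))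
    (hg : ∀ i ∈ s, g i ∈ ℤ_(p)) (h : ∀ i ∈ s, ratCongr p k (f i) (g i)) :
    ratCongr p k (∏ i ∈ s, f i) (∏ i ∈ s, g i) := by
  classical
  induction s using Finset.induction_on with
  | empty => exact ratCongr.refl 1
  | insert i s hi ih =>
    rw [forall_mem_insert] at hf hg h
    rw [prod_insert hi, prod_insert hi]
    exact h.1.mul hf.1 (prod_mem hg.2) (ih hf.2 hg.2 h.2)

theorem inv_natCast_mem_padicValuation_integer {m : ℕ} (h : ¬ p ∣ m) : (m : ℚ)⁻¹ ∈ ℤ_(p) := by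
  rw [Valuation.mem_integer_iff, Rat.padicValuation_le_one_iff, Rat.inv_natCast_den]
  split_ifs <;> simp_all

theorem inv_factorial_mem_padicValuation_integer {m : ℕ} (hm : m < p) : (m ! : ℚ)⁻¹ ∈ ℤ_(p) :=
  inv_natCast_mem_padicValuation_integer fun h => hm.not_ge ((Nat.Prime.dvd_factorial Fact.out).1 h)

theorem two_inv_mem_padicValuation_integer (hp : p ≠ 2) : (2 : ℚ)⁻¹ ∈ ℤ_(p) := by
  exact_mod_cast inv_natCast_mem_padicValuation_integer (m := 2) fun h =>
    hp ((Nat.prime_dvd_prime_iff_eq Fact.out Nat.prime_two).1 h)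

theorem ascPochhammer_eval_mem_padicValuation_integer {x : ℚ} (hx : x ∈ ℤ_(p)) (n : ℕ) :
    (ascPochhammer ℚ n).eval x ∈ ℤ_(p) := by
  induction n with
  | zero => simp
  | succ n ih => rw [ascPochhammer_succ_eval]; exact mul_mem ih (add_mem hx (natCast_mem _ n))

theorem ratCongr_ascPochhammer_add_half_sq (hp : p ≠ 2) {x : ℚ} (hx : x ∈ ℤ_(p)) (N : ℕ) :
    ratCongr p 2 ((ascPochhammer ℚ N).eval (x + p / 2) ^ 2)
      ((ascPochhammer ℚ N).eval x * (ascPochhammer ℚ N).eval (x + p)) := by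
  have h2 := two_inv_mem_padicValuation_integer hp
  simp only [ascPochhammer_eval_eq_prod_range, ← prod_pow, ← prod_mul_distrib]
  refine ratCongr_prod (fun i _ => ?_) (fun i _ => ?_) fun i _ => ratCongr_iff.2 ⟨2⁻¹ ^ 2, ?_, ?_⟩
  · rw [div_eq_mul_inv]
    exact pow_mem (add_mem (add_mem hx (mul_mem (natCast_mem _ p) h2)) (natCast_mem _ i)) 2
  · exact mul_mem (add_mem hx (natCast_mem _ i)) (add_mem (add_mem hx (natCast_mem _ p))
      (natCast_mem _ i))
  · exact pow_mem h2 2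
  · ring

theorem ratCongr_ascPochhammer_half_sq (hp : p ≠ 2) (r : ℕ) :
    ratCongr p 2 ((ascPochhammer ℚ r).eval 2⁻¹ ^ 2)
      ((-1) ^ r * (ascPochhammer ℚ (2 * r)).eval ((p : ℚ) / 2 - r + 2⁻¹)) := by
  have h2 := two_inv_mem_padicValuation_integer hp
  have hj (j : ℕ) : (j : ℚ) + 2⁻¹ ∈ ℤ_(p) := add_mem (natCast_mem _ j) h2
  rw [ascPochhammer_eval_sub_add_half, ascPochhammer_eval_eq_prod_range, ← prod_pow,
    show (-1 : ℚ) ^ r = (-1) ^ #(range r) by rw [card_range], ← prod_neg]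
  refine ratCongr_prod (fun j _ => ?_) (fun j _ => ?_) fun j _ => ratCongr_iff.2 ⟨2⁻¹ ^ 2, ?_, ?_⟩
  · rw [add_comm]
    exact pow_mem (hj j) 2
  · rw [div_eq_mul_inv]
    exact neg_mem (sub_mem (pow_mem (mul_mem (natCast_mem _ p) h2) 2) (pow_mem (hj j) 2))
  · exact pow_mem h2 2
  · ring

theorem ascPochhammer_half_sq_div_mem_padicValuation_integer (hp : p ≠ 2) {r N : ℕ}
    (hNp : r + N < p) :
    (ascPochhammer ℚ r).eval 2⁻¹ ^ 2 / (2 ^ r * r !) /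
      ((ascPochhammer ℚ N).eval ((r : ℚ) + 1) * N ! * 2 ^ N) ∈ ℤ_(p) := by
  have h2 := two_inv_mem_padicValuation_integer hp
  have hfac : (r ! : ℚ) * (ascPochhammer ℚ N).eval ((r : ℚ) + 1) = (r + N)! := by
    exact_mod_cast factorial_mul_ascPochhammer ℚ r N
  have hpos : (ascPochhammer ℚ N).eval ((r : ℚ) + 1) ≠ 0 :=
    (ascPochhammer_pos N _ (by positivity)).ne'
  rw [show (ascPochhammer ℚ r).eval 2⁻¹ ^ 2 / (2 ^ r * r !) /
      ((ascPochhammer ℚ N).eval ((r : ℚ) + 1) * N ! * 2 ^ N) =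
      (ascPochhammer ℚ r).eval 2⁻¹ ^ 2 * (2 ^ (r + N))⁻¹ * ((r + N)! : ℚ)⁻¹ * (N ! : ℚ)⁻¹ by
    rw [← hfac]; field_simp; ring]
  exact mul_mem (mul_mem (mul_mem (pow_mem (ascPochhammer_eval_mem_padicValuation_integer h2 r) 2)
    (inv_pow (2 : ℚ) (r + N) ▸ pow_mem h2 _)) (inv_factorial_mem_padicValuation_integer hNp))
    (inv_factorial_mem_padicValuation_integer (by omega))

theorem ratCongr_sum_hypergeomSum (hp : p ≠ 2) {ν r : ℕ} (hpν : p = 2 * (ν + r) + 1) :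
    ratCongr p 2
      (∑ k ∈ range (ν + r + 1), ((2 * k).choose k : ℚ) ^ 2 / 32 ^ k * ∏ i ∈ range r, ((k : ℚ) - i))
      ((ascPochhammer ℚ r).eval 2⁻¹ ^ 2 / (2 ^ r * r !) * hypergeomSum ((r : ℚ) + 1) ν) := by
  have hvanish : ∀ k ∈ range r,
      ((2 * k).choose k : ℚ) ^ 2 / 32 ^ k * ∏ i ∈ range r, ((k : ℚ) - i) = 0 := fun k hk => by
    rw [prod_eq_zero hk (sub_self _), mul_zero]
  rw [show ν + r + 1 = r + (ν + 1) by ring, sum_range_add, sum_eq_zero hvanish, zero_add,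
    hypergeomSum, mul_sum]
  refine ratCongr_sum fun N hN => ?_
  have hNp : r + N < p := by simp only [mem_range] at hN; omega
  rw [← descPochhammer_eval_eq_prod_range, descPochhammer_eval_eq_descFactorial,
    choose_two_mul_sq_div_mul_descFactorial, hypergeomTerm]
  have key := (ratCongr_ascPochhammer_add_half_sq hp (x := -(ν : ℚ))
    (neg_mem (natCast_mem _ ν)) N).mul_left
    (ascPochhammer_half_sq_div_mem_padicValuation_integer hp hNp)
  rw [hpν] at key
  push_cast at key
  convert key using 1
  · rw [show -(ν : ℚ) + (2 * (ν + r) + 1) / 2 = r + 2⁻¹ by ring]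
    ring
  · rw [show -(ν : ℚ) + (2 * (ν + r) + 1) = ν + 2 * (r + 1) - 1 by ring]
    ring

theorem ratCongr_ascPochhammer_ratio_factorial_ratio (hp : p ≠ 2) {J r : ℕ}
    (hp4 : p = 4 * J + 2 * r + 1) :
    ratCongr p 2
      ((ascPochhammer ℚ r).eval 2⁻¹ ^ 2 / (2 ^ r * r !) *
        ((-1) ^ J * (ascPochhammer ℚ J).eval 2⁻¹ / (ascPochhammer ℚ J).eval ((r : ℚ) + 1)))
      ((-1) ^ (J + r) * ((2 : ℚ) ^ (2 * J + r))⁻¹ * ((2 * J + r + r)! : ℚ) /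
        ((J ! : ℚ) * ((J + r)! : ℚ))) := by
  -- Both sides are `K` times the two sides of `ratCongr_ascPochhammer_half_sq`.
  set K : ℚ := (-1) ^ J * (2 * J)! * ((2 : ℚ) ^ (2 * J + r))⁻¹ * (J ! : ℚ)⁻¹ * ((J + r)! : ℚ)⁻¹
    with hK_def
  have hK : K ∈ ℤ_(p) := by
    refine mul_mem (mul_mem (mul_mem (mul_mem (pow_mem (neg_mem (one_mem _)) J) (natCast_mem _ _))
      ?_) (inv_factorial_mem_padicValuation_integer (by omega)))
      (inv_factorial_mem_padicValuation_integer (by omega))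
    rw [← inv_pow]
    exact pow_mem (two_inv_mem_padicValuation_integer hp) _
  have key := (ratCongr_ascPochhammer_half_sq hp r).mul_left hK
  rw [hp4] at key
  push_cast at key
  have half : (ascPochhammer ℚ J).eval 2⁻¹ = (2 * J)! / (2 ^ (2 * J) * J !) := by
    rw [eq_div_iff (by positivity), pow_mul, ← four_pow_mul_factorial_mul_ascPochhammer_half]
    ring
  have shifted : (ascPochhammer ℚ J).eval ((r : ℚ) + 1) = (J + r)! / r ! := by
    rw [eq_div_iff (by positivity), add_comm J, ← factorial_mul_ascPochhammer]
    ring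
  have central : ((2 * J + r + r)! : ℚ) =
      (2 * J)! * (ascPochhammer ℚ (2 * r)).eval (2 * (J : ℚ) + 1) := by
    rw [show 2 * J + r + r = 2 * J + 2 * r by ring, ← factorial_mul_ascPochhammer]
    push_cast
    ring
  convert key using 1
  · rw [half, shifted, hK_def]
    field_simp
    ring
  · rw [central, show (4 * J + 2 * r + 1 : ℚ) / 2 - r + 2⁻¹ = 2 * J + 1 by ring, hK_def]
    field_simp
    ring

end Congruence

theorem stmt7_general (p : ℕ) (hp : p.Prime) (hodd : p ≠ 2) (r : ℕ)
    (hr2 : r ≤ (p - 1) / 2) :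
    ((p + 1 - 2 * r) % 4 = 0 →
      ratCongr p 2
        (∑ k ∈ Finset.range ((p - 1) / 2 + 1),
          ((2 * k).choose k : ℚ) ^ 2 / 32 ^ k * ∏ i ∈ Finset.range r, ((k : ℚ) - i)) 0) ∧
    ((p - 1 - 2 * r) % 4 = 0 →
      ratCongr p 2
        (∑ k ∈ Finset.range ((p - 1) / 2 + 1),
          ((2 * k).choose k : ℚ) ^ 2 / 32 ^ k * ∏ i ∈ Finset.range r, ((k : ℚ) - i))
        ((-1 : ℚ) ^ ((p - 1 + 2 * r) / 4) * ((2 : ℚ) ^ ((p - 1) / 2))⁻¹ *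
          (((p - 1) / 2 + r).factorial : ℚ) /
            ((((p - 1 - 2 * r) / 4).factorial : ℚ) * (((p - 1 + 2 * r) / 4).factorial : ℚ)))) := by
  have := Fact.mk hp
  obtain ⟨ν, hν⟩ : ∃ ν, (p - 1) / 2 = ν + r := ⟨(p - 1) / 2 - r, by omega⟩
  have hpν : p = 2 * (ν + r) + 1 := by
    obtain ⟨n, hn⟩ := hp.odd_of_ne_two hodd
    omega
  have hsum := ratCongr_sum_hypergeomSum hodd hpν
  have hc : (0 : ℚ) < r + 1 := by positivity
  rw [hν]
  refine ⟨fun h => ?_, fun h => ?_⟩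
  · obtain ⟨J, rfl⟩ : ∃ J, ν = 2 * J + 1 := ⟨ν / 2, by omega⟩
    rwa [hypergeomSum_two_mul_add_one hc, mul_zero] at hsum
  · obtain ⟨J, rfl⟩ : ∃ J, ν = 2 * J := ⟨ν / 2, by omega⟩
    rw [hypergeomSum_two_mul hc] at hsum
    rw [show (p - 1 + 2 * r) / 4 = J + r by omega, show (p - 1 - 2 * r) / 4 = J by omega]
    exact hsum.trans (ratCongr_ascPochhammer_ratio_factorial_ratio hodd (by omega))

theorem stmt7 (p : ℕ) (hp : p.Prime) (hodd : p ≠ 2) (r : ℕ) (hr1 : 1 ≤ r)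
    (hr2 : r ≤ (p - 1) / 2) :
    ((p + 1 - 2 * r) % 4 = 0 →
      ratCongr p 2
        (∑ k ∈ Finset.range ((p - 1) / 2 + 1),
          ((2 * k).choose k : ℚ) ^ 2 / 32 ^ k * ∏ i ∈ Finset.range r, ((k : ℚ) - i)) 0) ∧
    ((p - 1 - 2 * r) % 4 = 0 →
      ratCongr p 2
        (∑ k ∈ Finset.range ((p - 1) / 2 + 1),
          ((2 * k).choose k : ℚ) ^ 2 / 32 ^ k * ∏ i ∈ Finset.range r, ((k : ℚ) - i))
        ((-1 : ℚ) ^ ((p - 1 + 2 * r) / 4) * ((2 : ℚ) ^ ((p - 1) / 2))⁻¹ *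
          (((p - 1) / 2 + r).factorial : ℚ) /
            ((((p - 1 - 2 * r) / 4).factorial : ℚ) * (((p - 1 + 2 * r) / 4).factorial : ℚ)))) :=
  stmt7_general p hp hodd r hr2
end

section
/- Let p > 3 be a prime and x a rational p-integer. Then \sum_{k=0}^{\lfloor p/3 \rfloor} (3k)!/(27^k k!^3) \cdot (x^k - (-1)^{\lfloor p/3 \rfloor} (1-x)^k) \equiv 0 \pmod{p}. -/
open Finset

/-!
Write `m = ⌊p/3⌋`. Since `3m ≡ -1` or `-2 (mod p)`, one has `(3k+1)(3k+2) ≡ -9(m-k)(m+k+1)`, and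
induction on `k` gives `(3k)! ≡ (-1)^k C(m,k) C(m+k,k) 27^k k!^3 (mod p)`. For `k ≤ m` the
denominator `27^k k!^3` is prime to `p`, so the sum is congruent to `P_m(x) - (-1)^m P_m(1-x)`,
where `P_m` is the shifted Legendre polynomial; this vanishes by the symmetry
`P_m(x) = (-1)^m P_m(1-x)`.
-/

open Nat Polynomial

def pIntegralSubring (p : ℕ) [Fact p.Prime] : Subring ℚ where
  carrier := {q | ¬ p ∣ q.den}
  mul_mem' {a b} ha hb h := by
    rcases (Fact.out : p.Prime).dvd_mul.mp (h.trans (Rat.mul_den_dvd a b)) with h | h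
    exacts [ha h, hb h]
  one_mem' := by simpa using (Fact.out : p.Prime).ne_one
  add_mem' {a b} ha hb h := by
    rcases (Fact.out : p.Prime).dvd_mul.mp (h.trans (Rat.add_den_dvd a b)) with h | h
    exacts [ha h, hb h]
  zero_mem' := by simpa using (Fact.out : p.Prime).ne_one
  neg_mem' {a} ha := by simpa [Rat.neg_den] using ha

section pIntegral

variable {p : ℕ} [Fact p.Prime]

theorem mem_pIntegralSubring {q : ℚ} : q ∈ pIntegralSubring p ↔ ¬ p ∣ q.den := Iff.rfl

theorem inv_natCast_mem_pIntegralSubring {d : ℕ} (hd : ¬ p ∣ d) :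
    (d : ℚ)⁻¹ ∈ pIntegralSubring p := by
  rw [mem_pIntegralSubring, Rat.inv_natCast_den]
  split_ifs with h
  · simpa using (Fact.out : p.Prime).ne_one
  · exact hd

theorem exists_intCast_div_sub_eq_mul {a b : ℤ} {d : ℕ} (hd : ¬ p ∣ d)
    (h : (a : ZMod p) = b * d) :
    ∃ c ∈ pIntegralSubring p, (a : ℚ) / d - b = p * c := by
  obtain ⟨M, hM⟩ : (p : ℤ) ∣ a - b * d := by
    rw [← ZMod.intCast_zmod_eq_zero_iff_dvd]
    push_cast
    rw [h, sub_self]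
  refine ⟨M * (d : ℚ)⁻¹, mul_mem (intCast_mem _ M) (inv_natCast_mem_pIntegralSubring hd), ?_⟩
  have hd0 : (d : ℚ) ≠ 0 := by
    rintro h0
    exact hd (by rw [Nat.cast_eq_zero.mp h0]; exact dvd_zero p)
  field_simp
  linear_combination (mod_cast hM : (a : ℚ) - b * d = p * M)

end pIntegral

theorem three_mul_add_one_mul_three_mul_add_two_eq {p : ℕ} (h3 : ¬ 3 ∣ p) {k : ℕ}
    (hk : k ≤ p / 3) :
    ((3 * k + 1) * (3 * k + 2) : ZMod p) =
      -9 * ((p / 3 - k : ℕ) : ZMod p) * ((p / 3 + k + 1 : ℕ) : ZMod p) := by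
  have hdiv : ((3 * (p / 3) + p % 3 : ℕ) : ZMod p) = 0 := by
    rw [Nat.div_add_mod, ZMod.natCast_self]
  push_cast [Nat.cast_sub hk] at hdiv ⊢
  rcases (by omega : p % 3 = 1 ∨ p % 3 = 2) with h | h <;> rw [h] at hdiv <;> push_cast at hdiv
  · linear_combination (3 * ((p / 3 : ℕ) : ZMod p) + 2) * hdiv
  · linear_combination (3 * ((p / 3 : ℕ) : ZMod p) + 1) * hdiv

theorem natCast_factorial_three_mul_eq {p : ℕ} (h3 : ¬ 3 ∣ p) (k : ℕ) :
    ((3 * k)! : ZMod p) =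
      (-1) ^ k * ((p / 3).choose k : ZMod p) * ((p / 3 + k).choose k : ZMod p) * 27 ^ k *
        (k ! : ZMod p) ^ 3 := by
  set m := p / 3 with hm
  induction k with
  | zero => simp
  | succ k ih =>
    have hfact : (3 * (k + 1))! = (3 * k)! * ((3 * k + 1) * (3 * k + 2) * (3 * k + 3)) := by
      rw [show 3 * (k + 1) = 3 * k + 2 + 1 by ring, factorial_succ, factorial_succ,
        factorial_succ]
      ring
    rcases le_or_gt k m with hk | hk
    · have hfactor := three_mul_add_one_mul_three_mul_add_two_eq h3 hk
      rw [← hm] at hfactor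
      have hA : ((m.choose (k + 1) * (k + 1) : ℕ) : ZMod p) = (m.choose k * (m - k) : ℕ) :=
        congrArg _ (choose_succ_right_eq m k)
      have hB : (((m + (k + 1)).choose (k + 1) * (k + 1) : ℕ) : ZMod p) =
          ((m + k + 1) * (m + k).choose k : ℕ) :=
        congrArg _ (add_one_mul_choose_eq (m + k) k).symm
      rw [hfact, factorial_succ]
      push_cast [Nat.cast_sub hk] at ih hfactor hA hB ⊢
      linear_combination ((3 * k + 1) * (3 * k + 2) * (3 * k + 3) : ZMod p) * ih +
        (-1) ^ k * (m.choose k : ZMod p) * ((m + k).choose k : ZMod p) * 27 ^ k *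
          (k ! : ZMod p) ^ 3 * 3 * (k + 1) * hfactor +
        (-1) ^ k * 27 ^ (k + 1) * (k ! : ZMod p) ^ 3 * (k + 1) *
          (((m + (k + 1)).choose (k + 1) : ZMod p) * (k + 1) * hA +
            (m.choose k : ZMod p) * (m - k) * hB)
    · rw [hfact, Nat.cast_mul, ih, choose_eq_zero_of_lt hk,
        choose_eq_zero_of_lt (show m < k + 1 by omega)]
      simp

theorem aeval_shiftedLegendre {R : Type*} [CommRing R] (n : ℕ) (x : R) :
    aeval x (shiftedLegendre n) =
      ∑ k ∈ range (n + 1), (-1) ^ k * (n.choose k : R) * ((n + k).choose k : R) * x ^ k := by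
  simp only [shiftedLegendre, map_sum, map_mul, map_pow, map_neg, map_one, map_natCast, aeval_X]
  exact sum_congr rfl fun k _ => by rw [choose_symm_add]

theorem exists_factorial_three_mul_div_sub_eq_mul {p : ℕ} [hp : Fact p.Prime] (hp3 : 3 < p)
    {k : ℕ} (hk : k ≤ p / 3) :
    ∃ c ∈ pIntegralSubring p, ((3 * k)! : ℚ) / (27 ^ k * (k ! : ℚ) ^ 3) -
      (-1) ^ k * ((p / 3).choose k : ℚ) * ((p / 3 + k).choose k : ℚ) = p * c := by
  have h27 : ¬ p ∣ 27 ^ k := fun h => by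
    have := (Nat.prime_dvd_prime_iff_eq hp.out Nat.prime_three).mp
      (hp.out.dvd_of_dvd_pow (show p ∣ 3 ^ (3 * k) by rwa [pow_mul]))
    omega
  have hfact : ¬ p ∣ k ! ^ 3 := fun h => by
    have := hp.out.dvd_factorial.mp (hp.out.dvd_of_dvd_pow h)
    omega
  have hd : ¬ p ∣ 27 ^ k * k ! ^ 3 := fun h => (hp.out.dvd_mul.mp h).elim h27 hfact
  have h3 : ¬ 3 ∣ p := fun h => by
    have := (Nat.prime_dvd_prime_iff_eq Nat.prime_three hp.out).mp h
    omega
  have hcong : (((3 * k)! : ℤ) : ZMod p) =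
      (((-1) ^ k * (p / 3).choose k * (p / 3 + k).choose k : ℤ) : ZMod p) *
        ((27 ^ k * k ! ^ 3 : ℕ) : ZMod p) := by
    push_cast
    rw [natCast_factorial_three_mul_eq h3]
    ring
  simpa using exists_intCast_div_sub_eq_mul hd hcong

theorem stmt9 (p : ℕ) (hp : p.Prime) (hp3 : 3 < p) (x : ℚ) (hx : ¬ (p ∣ x.den)) :
    ratCongr p 1
      (∑ k ∈ Finset.range (p / 3 + 1),
        ((3 * k).factorial : ℚ) / (27 ^ k * (k.factorial : ℚ) ^ 3) *
          (x ^ k - (-1 : ℚ) ^ (p / 3) * (1 - x) ^ k)) 0 := by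
  have := Fact.mk hp
  set m := p / 3
  set u : ℕ → ℚ := fun k => x ^ k - (-1) ^ m * (1 - x) ^ k
  choose! c hcS hc using fun k (hk : k ∈ range (m + 1)) =>
    exists_factorial_three_mul_div_sub_eq_mul hp3 (mem_range_succ_iff.mp hk)
  have hlegendre : ∑ k ∈ range (m + 1),
      (-1) ^ k * (m.choose k : ℚ) * ((m + k).choose k : ℚ) * u k = 0 := by
    have hsymm := shiftedLegendre_eval_symm m x
    rw [aeval_shiftedLegendre, aeval_shiftedLegendre, mul_sum, ← sub_eq_zero,
      ← sum_sub_distrib] at hsymm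
    rw [← hsymm]
    exact sum_congr rfl fun k _ => by ring
  have hxS : x ∈ pIntegralSubring p := hx
  refine ⟨∑ k ∈ range (m + 1), c k * u k, ?_, ?_⟩
  · calc _ = ∑ k ∈ range (m + 1),
          ((-1) ^ k * (m.choose k : ℚ) * ((m + k).choose k : ℚ) * u k + p * (c k * u k)) := by
          rw [sub_zero]
          refine sum_congr rfl fun k hk => ?_
          rw [← mul_assoc, ← hc k hk]
          ring
      _ = _ := by rw [sum_add_distrib, hlegendre, ← mul_sum, pow_one, zero_add]
  · exact sum_mem fun k hk => mul_mem (hcS k hk) (sub_mem (pow_mem hxS k)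
      (mul_mem (pow_mem (neg_mem (one_mem _)) m) (pow_mem (sub_mem (one_mem _) hxS) k)))
end

section
/- Let p > 5 be a prime. If p \equiv 1 (mod 6), then \sum_{k=0}^{\lfloor p/3 \rfloor} k (3k)!/(54^k k!^3) \equiv 0 \pmod{p}. If p \equiv 5 (mod 6), then \sum_{k=0}^{\lfloor p/3 \rfloor} k (3k)!/(54^k k!^3) \equiv (1/3)(-1)^{(p+1)/6} 2^{-(p+1)/3} \binom{(p+1)/3}{(p+1)/6} \pmod{p}. -/
/-!
Let `m = ⌊p/3⌋`, so that `p = 3m + 1` or `3m + 2` and `(3m + 1)(3m + 2) ≡ 0 (mod p)`, i.e.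
`m ≡ -1/3` or `-2/3`. Then `(3k)!/(27^k k!^3) = (1/3)_k (2/3)_k / k!^2 ≡ (-1)^k C(m,k) C(m+k,k)` for
`k ≤ m`, and the sum becomes `2^{-m} ∑_k k (-1)^k 2^{m-k} C(m,k) C(m+k,k)`. Expanding `C(m+k,k)` by
Vandermonde's identity turns this into `2^{-m} ∑_j (-1)^j C(m,j)^2 (2j - m)`, which equals
`-2^{1-m} m ∑_i (-1)^i C(m-1,i)^2`; the last alternating sum is the coefficient of `X^{m-1}` in
`(1 - X^2)^{m-1}`. It vanishes when `m` is even (`p ≡ 1 mod 6`) and equals `(-1)^t C(2t,t)` when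
`m = 2t + 1` (`p ≡ 5 mod 6`).
-/

open Finset

open Polynomial

theorem sum_neg_one_pow_mul_two_pow_mul_choose (n : ℕ) :
    ∑ i ∈ range (n + 1), (-1 : ℤ) ^ i * 2 ^ (n - i) * n.choose i = 1 := by
  simpa [show (-1 : ℤ) + 2 = 1 by norm_num] using (add_pow (-1 : ℤ) 2 n).symm

theorem sum_mul_neg_one_pow_mul_two_pow_mul_choose (n : ℕ) :
    ∑ i ∈ range (n + 1), (i : ℤ) * ((-1) ^ i * 2 ^ (n - i) * n.choose i) = -n := by
  cases n with
  | zero => simp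
  | succ n =>
    have hterm : ∀ i ∈ range (n + 1),
        ((i + 1 : ℕ) : ℤ) * ((-1) ^ (i + 1) * 2 ^ (n + 1 - (i + 1)) * (n + 1).choose (i + 1))
          = -(n + 1) * ((-1) ^ i * 2 ^ (n - i) * n.choose i) := by
      intro i _
      have h : ((n + 1 : ℕ) : ℤ) * n.choose i = (n + 1).choose (i + 1) * (i + 1 : ℕ) := by
        exact_mod_cast Nat.add_one_mul_choose_eq n i
      rw [Nat.add_sub_add_right]
      push_cast at h ⊢
      linear_combination ((-1 : ℤ) ^ i * 2 ^ (n - i)) * h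
    rw [sum_range_succ', sum_congr rfl hterm, ← mul_sum, sum_neg_one_pow_mul_two_pow_mul_choose]
    push_cast; ring

theorem sum_mul_neg_one_pow_mul_two_pow_mul_choose_mul_choose {m j : ℕ} (hj : j ≤ m) :
    ∑ k ∈ range (m + 1), (k : ℤ) * ((-1) ^ k * 2 ^ (m - k) * (m.choose k * k.choose j))
      = (-1) ^ j * m.choose j * (2 * j - m) := by
  obtain ⟨d, rfl⟩ := Nat.exists_eq_add_of_le hj
  have hlow : ∀ k ∈ range j,
      (k : ℤ) * ((-1) ^ k * 2 ^ (j + d - k) * ((j + d).choose k * k.choose j)) = 0 := by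
    intro k hk
    simp [Nat.choose_eq_zero_of_lt (mem_range.mp hk)]
  have hhigh : ∀ i ∈ range (d + 1),
      ((j + i : ℕ) : ℤ) * ((-1) ^ (j + i) * 2 ^ (j + d - (j + i))
        * ((j + d).choose (j + i) * (j + i).choose j))
      = (-1) ^ j * (j + d).choose j * (j * ((-1) ^ i * 2 ^ (d - i) * d.choose i)
          + i * ((-1) ^ i * 2 ^ (d - i) * d.choose i)) := by
    intro i _
    have hc : ((j + d).choose (j + i) : ℤ) * (j + i).choose j = (j + d).choose j * d.choose i := by
      exact_mod_cast (Nat.choose_mul (n := j + d) (Nat.le_add_right j i)).trans (by simp)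
    rw [Nat.add_sub_add_left, hc]
    push_cast; ring
  rw [show j + d + 1 = j + (d + 1) by ring, sum_range_add, sum_congr rfl hlow, sum_const_zero,
    zero_add, sum_congr rfl hhigh, ← mul_sum, sum_add_distrib, ← mul_sum,
    sum_neg_one_pow_mul_two_pow_mul_choose, sum_mul_neg_one_pow_mul_two_pow_mul_choose]
  push_cast; ring

theorem add_choose_eq_sum_choose_mul_choose (m k : ℕ) :
    (m + k).choose k = ∑ j ∈ range (m + 1), m.choose j * k.choose j := by
  rw [← Nat.choose_symm_add, add_comm, Nat.add_choose_eq,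
    Nat.sum_antidiagonal_eq_sum_range_succ (fun i j => k.choose i * m.choose j)]
  refine sum_congr rfl fun i hi => ?_
  rw [Nat.choose_symm (Nat.lt_succ_iff.mp (mem_range.mp hi)), mul_comm]

theorem sum_mul_neg_one_pow_mul_two_pow_mul_choose_mul_add_choose (m : ℕ) :
    ∑ k ∈ range (m + 1), (k : ℤ) * ((-1) ^ k * 2 ^ (m - k) * (m.choose k * (m + k).choose k))
      = ∑ j ∈ range (m + 1), (-1) ^ j * (m.choose j : ℤ) ^ 2 * (2 * j - m) := by
  simp_rw [add_choose_eq_sum_choose_mul_choose m, Nat.cast_sum, mul_sum]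
  rw [sum_comm]
  refine sum_congr rfl fun j hj => ?_
  rw [show (-1) ^ j * (m.choose j : ℤ) ^ 2 * (2 * j - m)
      = m.choose j * ((-1) ^ j * m.choose j * (2 * j - m)) by ring,
    ← sum_mul_neg_one_pow_mul_two_pow_mul_choose_mul_choose (Nat.lt_succ_iff.mp (mem_range.mp hj)),
    mul_sum]
  refine sum_congr rfl fun k _ => ?_
  push_cast; ring

theorem sum_neg_one_pow_mul_choose_sq_mul_two_mul_sub (n : ℕ) :
    ∑ j ∈ range (n + 1 + 1), (-1 : ℤ) ^ j * ((n + 1).choose j : ℤ) ^ 2 * (2 * j - (n + 1 : ℕ))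
      = -2 * (n + 1) * ∑ i ∈ range (n + 1), (-1 : ℤ) ^ i * (n.choose i : ℤ) ^ 2 := by
  have hterm : ∀ i ∈ range (n + 1),
      (-1) ^ (i + 1) * ((n + 1).choose (i + 1) : ℤ) ^ 2 * (2 * (i + 1 : ℕ) - (n + 1 : ℕ))
        = -(n + 1) * ((-1) ^ i * (n.choose i : ℤ) ^ 2 - (-1) ^ i * (n.choose (i + 1) : ℤ) ^ 2) := by
    intro i hi
    have hi : i ≤ n := Nat.lt_succ_iff.mp (mem_range.mp hi)
    have hc : ((n + 1).choose (i + 1) : ℤ) = n.choose i + n.choose (i + 1) := by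
      exact_mod_cast Nat.choose_succ_succ n i
    have h1 : ((n + 1 : ℕ) : ℤ) * n.choose i = (n + 1).choose (i + 1) * (i + 1 : ℕ) := by
      exact_mod_cast Nat.add_one_mul_choose_eq n i
    have h2 : (n.choose (i + 1) : ℤ) * (n + 1 : ℕ) = (n + 1).choose (i + 1) * (n - i : ℕ) := by
      exact_mod_cast (Nat.choose_mul_succ_eq n (i + 1)).trans (by rw [Nat.add_sub_add_right])
    push_cast [Nat.cast_sub hi] at h1 h2 ⊢
    linear_combination ((-1 : ℤ) ^ i * (n + 1).choose (i + 1)) * h1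
      - ((-1 : ℤ) ^ i * (n + 1).choose (i + 1)) * h2
      - ((-1 : ℤ) ^ i * (n + 1) * (n.choose i - n.choose (i + 1))) * hc
  have hshift : ∑ i ∈ range (n + 1), (-1) ^ i * (n.choose (i + 1) : ℤ) ^ 2
      = 1 - ∑ i ∈ range (n + 1), (-1) ^ i * (n.choose i : ℤ) ^ 2 := by
    have h := sum_range_succ' (fun j => (-1 : ℤ) ^ j * (n.choose j : ℤ) ^ 2) (n + 1)
    have hneg : ∑ i ∈ range (n + 1), (-1 : ℤ) ^ (i + 1) * (n.choose (i + 1) : ℤ) ^ 2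
        = -∑ i ∈ range (n + 1), (-1) ^ i * (n.choose (i + 1) : ℤ) ^ 2 := by
      rw [← sum_neg_distrib]; exact sum_congr rfl fun i _ => by ring
    rw [sum_range_succ, hneg, Nat.choose_succ_self] at h
    simp only [Nat.choose_zero_right] at h
    linear_combination h
  rw [sum_range_succ', sum_congr rfl hterm, ← mul_sum, sum_sub_distrib, hshift]
  push_cast [Nat.choose_zero_right]; ring

theorem coeff_one_sub_X_pow {R : Type*} [CommRing R] (n k : ℕ) :
    ((1 - X : R[X]) ^ n).coeff k = (-1) ^ k * n.choose k := by
  rw [show (1 - X : R[X]) = (X + C (-1)) * C (-1) by simp; ring, mul_pow, ← C_pow, coeff_mul_C,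
    coeff_X_add_C_pow]
  rcases le_or_gt k n with hk | hk
  · obtain ⟨d, rfl⟩ := Nat.exists_eq_add_of_le hk
    have hsq : ((-1 : R) ^ d) ^ 2 = 1 := by rw [← pow_mul, pow_mul', neg_one_sq, one_pow]
    rw [Nat.add_sub_cancel_left, pow_add]
    linear_combination ((-1 : R) ^ k * (k + d).choose k) * hsq
  · simp [Nat.choose_eq_zero_of_lt hk]

theorem sum_neg_one_pow_mul_choose_sq_eq_coeff (n : ℕ) :
    ∑ i ∈ range (n + 1), (-1 : ℤ) ^ i * (n.choose i : ℤ) ^ 2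
      = ((1 - X ^ 2 : ℤ[X]) ^ n).coeff n := by
  rw [show (1 - X ^ 2 : ℤ[X]) = (1 - X) * (1 + X) by ring, mul_pow, coeff_mul,
    Nat.sum_antidiagonal_eq_sum_range_succ
      (fun i j => ((1 - X : ℤ[X]) ^ n).coeff i * ((1 + X) ^ n).coeff j)]
  refine sum_congr rfl fun i hi => ?_
  rw [coeff_one_sub_X_pow, coeff_one_add_X_pow,
    Nat.choose_symm (Nat.lt_succ_iff.mp (mem_range.mp hi))]
  ring

theorem coeff_one_sub_X_sq_pow (n k : ℕ) :
    ((1 - X ^ 2 : ℤ[X]) ^ n).coeff k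
      = if 2 ∣ k then (-1 : ℤ) ^ (k / 2) * n.choose (k / 2) else 0 := by
  rw [show (1 - X ^ 2 : ℤ[X]) ^ n = expand ℤ 2 ((1 - X) ^ n) by simp, coeff_expand two_pos]
  split_ifs <;> simp [coeff_one_sub_X_pow]

theorem sum_neg_one_pow_mul_choose_sq_of_odd {n : ℕ} (hn : Odd n) :
    ∑ i ∈ range (n + 1), (-1 : ℤ) ^ i * (n.choose i : ℤ) ^ 2 = 0 := by
  rw [sum_neg_one_pow_mul_choose_sq_eq_coeff, coeff_one_sub_X_sq_pow,
    if_neg (by rcases hn with ⟨t, rfl⟩; omega)]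

theorem sum_neg_one_pow_mul_choose_sq_two_mul (t : ℕ) :
    ∑ i ∈ range (2 * t + 1), (-1 : ℤ) ^ i * ((2 * t).choose i : ℤ) ^ 2
      = (-1) ^ t * (2 * t).choose t := by
  rw [sum_neg_one_pow_mul_choose_sq_eq_coeff, coeff_one_sub_X_sq_pow, if_pos (dvd_mul_right 2 t),
    Nat.mul_div_cancel_left t two_pos]

/- The step `k → k + 1` reduces to `(3k+1)(3k+2) = -9(m-k)(m+k+1)`, which is the hypothesis
`9m² + 9m + 2 = 0` in disguise. -/
theorem factorial_three_mul_eq {R : Type*} [CommRing R] {m k : ℕ}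
    (hm : (3 * m + 1) * (3 * m + 2) = (0 : R)) (hk : k ≤ m) :
    ((3 * k).factorial : R) = (-27) ^ k * k.factorial ^ 3 * m.choose k * (m + k).choose k := by
  induction k with
  | zero => simp
  | succ k ih =>
    have hkm : k ≤ m := by omega
    have h3k : (3 * (k + 1)).factorial
        = (3 * k + 1) * (3 * k + 2) * (3 * k + 3) * (3 * k).factorial := by
      rw [show 3 * (k + 1) = 3 * k + 2 + 1 by ring]
      simp only [Nat.factorial_succ]; ring
    have hlow : (m.choose (k + 1) : R) * (k + 1) = m.choose k * (m - k) := by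
      have h := congrArg (Nat.cast : ℕ → R) (Nat.choose_succ_right_eq m k)
      push_cast [Nat.cast_sub hkm] at h
      exact h
    have hhigh : (m + k + 1 : R) * (m + k).choose k = (m + k + 1).choose (k + 1) * (k + 1) := by
      have h := congrArg (Nat.cast : ℕ → R) (Nat.add_one_mul_choose_eq (m + k) k)
      push_cast at h
      exact h
    rw [h3k, Nat.factorial_succ, ← add_assoc]
    push_cast
    rw [ih hkm]
    linear_combination
      (3 * (-27) ^ k * (k.factorial : R) ^ 3 * (k + 1) * m.choose k * (m + k).choose k) * hm
      + (27 * (-27) ^ k * (k.factorial : R) ^ 3 * (k + 1) * (m + k + 1).choose (k + 1) * (k + 1))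
        * hlow
      - (27 * (-27) ^ k * (k.factorial : R) ^ 3 * (k + 1) * m.choose k * (m - k)) * hhigh

theorem sum_mul_factorial_three_mul_div_eq {F : Type*} [Field F] {m : ℕ}
    (hm : (3 * m + 1) * (3 * m + 2) = (0 : F)) (h2 : (2 : F) ≠ 0)
    (hfact : (m.factorial : F) ≠ 0) :
    ∑ k ∈ range (m + 1), (k : F) * (3 * k).factorial / (54 ^ k * k.factorial ^ 3)
      = (∑ k ∈ range (m + 1),
          (k : F) * ((-1) ^ k * 2 ^ (m - k) * (m.choose k * (m + k).choose k))) / 2 ^ m := by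
  have h3 : (3 : F) ≠ 0 := fun h => h2 (by linear_combination hm - (3 * (m : F) ^ 2 + 3 * m) * h)
  have h27 : (27 : F) ≠ 0 := by
    rw [show (27 : F) = 3 ^ 3 by norm_num]; exact pow_ne_zero 3 h3
  rw [sum_div]
  refine sum_congr rfl fun k hk => ?_
  have hkm : k ≤ m := Nat.lt_succ_iff.mp (mem_range.mp hk)
  have hk : (k.factorial : F) ≠ 0 :=
    ne_zero_of_dvd_ne_zero hfact (Nat.cast_dvd_cast (Nat.factorial_dvd_factorial hkm))
  obtain ⟨d, rfl⟩ := Nat.exists_eq_add_of_le hkm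
  rw [factorial_three_mul_eq hm (Nat.le_add_right k d), Nat.add_sub_cancel_left,
    show (54 : F) ^ k = 2 ^ k * 27 ^ k by rw [← mul_pow]; norm_num,
    show (-27 : F) ^ k = (-1) ^ k * 27 ^ k by rw [← mul_pow]; norm_num]
  field_simp
  ring

theorem choose_two_mul_add_two_eq_of_six_mul_eq_one {R : Type*} [CommRing R] {u : ℕ}
    (h : 6 * ((u : R) + 1) = 1) :
    ((2 * u + 2).choose (u + 1) : R) = 12 * (2 * u + 1) * (2 * u).choose u := by
  have hc := congrArg (Nat.cast : ℕ → R) (Nat.succ_mul_centralBinom_succ u)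
  simp only [Nat.centralBinom_eq_two_mul_choose, show 2 * (u + 1) = 2 * u + 2 by ring] at hc
  push_cast at hc
  linear_combination 6 * hc - ((2 * u + 2).choose (u + 1) : R) * h

/- `Rat.cast` into a division ring of positive characteristic is additive and multiplicative only on
rationals whose denominators do not vanish there, hence the hypotheses on `den` below. -/
section RatCast

variable {α : Type*} [DivisionRing α]

theorem Rat.den_intCast_div_natCast_dvd (n : ℤ) (d : ℕ) : ((n : ℚ) / d).den ∣ d := by
  have h := Rat.den_dvd n d
  rw [Rat.divInt_eq_div, Int.cast_natCast] at h
  exact_mod_cast h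

theorem Rat.natCast_den_intCast_div_natCast_ne_zero (n : ℤ) {d : ℕ} (hd : (d : α) ≠ 0) :
    (((n : ℚ) / d).den : α) ≠ 0 :=
  ne_zero_of_dvd_ne_zero hd (Nat.cast_dvd_cast (Rat.den_intCast_div_natCast_dvd n d))

theorem Rat.cast_intCast_div_natCast {n : ℤ} {d : ℕ} (hd : (d : α) ≠ 0) :
    (((n : ℚ) / d : ℚ) : α) = n / d := by
  have h := Rat.cast_divInt_of_ne_zero (α := α) n (b := d) (by exact_mod_cast hd)
  rwa [Rat.divInt_eq_div, Int.cast_natCast, Int.cast_natCast] at h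

theorem Rat.natCast_den_sum_ne_zero {ι : Type*} {s : Finset ι} {f : ι → ℚ}
    (hf : ∀ i ∈ s, ((f i).den : α) ≠ 0) : ((∑ i ∈ s, f i).den : α) ≠ 0 := by
  classical
  induction s using Finset.induction_on with
  | empty => simp
  | insert a s ha ih =>
    rw [sum_insert ha]
    refine ne_zero_of_dvd_ne_zero ?_ (Nat.cast_dvd_cast (Rat.add_den_dvd _ _))
    rw [Nat.cast_mul]
    exact mul_ne_zero (hf a (mem_insert_self a s)) (ih fun i hi => hf i (mem_insert_of_mem hi))

theorem Rat.cast_sum_of_den_ne_zero {ι : Type*} {s : Finset ι} {f : ι → ℚ}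
    (hf : ∀ i ∈ s, ((f i).den : α) ≠ 0) : ((∑ i ∈ s, f i : ℚ) : α) = ∑ i ∈ s, (f i : α) := by
  classical
  induction s using Finset.induction_on with
  | empty => simp
  | insert a s ha ih =>
    have hs : ∀ i ∈ s, ((f i).den : α) ≠ 0 := fun i hi => hf i (mem_insert_of_mem hi)
    rw [sum_insert ha, sum_insert ha, Rat.cast_add_of_ne_zero (hf a (mem_insert_self a s))
      (Rat.natCast_den_sum_ne_zero hs), ih hs]

end RatCast

theorem ratCongr_one_of_cast_eq {p : ℕ} [Fact p.Prime] {a b : ℚ} (ha : (a.den : ZMod p) ≠ 0)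
    (hb : (b.den : ZMod p) ≠ 0) (h : (a : ZMod p) = b) : ratCongr p 1 a b := by
  have hden : ((a - b).den : ZMod p) ≠ 0 :=
    ne_zero_of_dvd_ne_zero (by rw [Nat.cast_mul]; exact mul_ne_zero ha hb)
      (Nat.cast_dvd_cast (Rat.sub_den_dvd a b))
  have hzero : ((a - b : ℚ) : ZMod p) = 0 := by rw [Rat.cast_sub_of_ne_zero ha hb, h, sub_self]
  rw [Rat.cast_def, div_eq_zero_iff, or_iff_left hden, ZMod.intCast_zmod_eq_zero_iff_dvd] at hzero
  obtain ⟨n, hn⟩ := hzero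
  refine ⟨(n : ℚ) / (a - b).den, ?_, fun hp => hden ?_⟩
  · conv_lhs => rw [← Rat.num_div_den (a - b), hn]
    push_cast; ring
  · rw [ZMod.natCast_eq_zero_iff]
    exact hp.trans (Rat.den_intCast_div_natCast_dvd n _)

theorem ZMod.natCast_ne_zero_of_pos_of_lt {p n : ℕ} (h0 : 0 < n) (hn : n < p) :
    (n : ZMod p) ≠ 0 := by
  rw [Ne, ZMod.natCast_eq_zero_iff]
  exact Nat.not_dvd_of_pos_of_lt h0 hn

theorem ZMod.three_mul_div_three_add_one_mul_add_two_eq_zero {p : ℕ} [Fact p.Prime] (hp : 3 < p) :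
    (3 * (p / 3 : ℕ) + 1) * (3 * (p / 3 : ℕ) + 2) = (0 : ZMod p) := by
  have h3p : p % 3 ≠ 0 := fun h => by
    have := (Nat.prime_def.mp Fact.out).2 3 (Nat.dvd_of_mod_eq_zero h); omega
  have hdvd : p ∣ (3 * (p / 3) + 1) * (3 * (p / 3) + 2) := by
    rcases (show p = 3 * (p / 3) + 1 ∨ p = 3 * (p / 3) + 2 by omega) with h | h
    · exact h ▸ dvd_mul_right _ _
    · exact h ▸ dvd_mul_left _ _
  exact_mod_cast (ZMod.natCast_eq_zero_iff _ p).mpr hdvd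

def trinomialSum (m : ℕ) : ℚ :=
  ∑ k ∈ range (m + 1), (k : ℚ) * (3 * k).factorial / (54 ^ k * k.factorial ^ 3)

theorem natCast_den_trinomialSum_ne_zero_and_cast_eq {F : Type*} [Field F] {m : ℕ}
    (h54 : (54 : F) ≠ 0) (hfact : (m.factorial : F) ≠ 0) :
    ((trinomialSum m).den : F) ≠ 0 ∧ ((trinomialSum m : ℚ) : F)
      = ∑ k ∈ range (m + 1), (k : F) * (3 * k).factorial / (54 ^ k * k.factorial ^ 3) := by
  have hd : ∀ k ∈ range (m + 1), ((54 ^ k * k.factorial ^ 3 : ℕ) : F) ≠ 0 := fun k hk => by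
    have hk := ne_zero_of_dvd_ne_zero hfact
      (Nat.cast_dvd_cast (Nat.factorial_dvd_factorial (Nat.lt_succ_iff.mp (mem_range.mp hk))))
    push_cast
    exact mul_ne_zero (pow_ne_zero k h54) (pow_ne_zero 3 hk)
  have hterm : ∀ k : ℕ, (k : ℚ) * (3 * k).factorial / (54 ^ k * k.factorial ^ 3)
      = ((k * (3 * k).factorial : ℕ) : ℤ) / ((54 ^ k * k.factorial ^ 3 : ℕ) : ℚ) := fun k => by
    push_cast; ring
  simp_rw [trinomialSum, hterm]
  refine ⟨Rat.natCast_den_sum_ne_zero fun k hk =>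
    Rat.natCast_den_intCast_div_natCast_ne_zero _ (hd k hk), ?_⟩
  rw [Rat.cast_sum_of_den_ne_zero fun k hk =>
    Rat.natCast_den_intCast_div_natCast_ne_zero _ (hd k hk)]
  refine sum_congr rfl fun k hk => ?_
  rw [Rat.cast_intCast_div_natCast (hd k hk)]
  push_cast; ring

theorem natCast_den_trinomialSum_ne_zero_and_cast_eq_zmod {p n : ℕ} [Fact p.Prime] (hp : 3 < p)
    (hn : p / 3 = n + 1) :
    ((trinomialSum (p / 3)).den : ZMod p) ≠ 0 ∧ ((trinomialSum (p / 3) : ℚ) : ZMod p)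
      = -((n + 1) * ((∑ i ∈ range (n + 1), (-1) ^ i * (n.choose i : ℤ) ^ 2 : ℤ) : ZMod p))
          / 2 ^ n := by
  have h2 : (2 : ZMod p) ≠ 0 := by
    exact_mod_cast ZMod.natCast_ne_zero_of_pos_of_lt two_pos (by omega)
  have h3 : (3 : ZMod p) ≠ 0 := by exact_mod_cast ZMod.natCast_ne_zero_of_pos_of_lt three_pos hp
  have h54 : (54 : ZMod p) ≠ 0 := by
    rw [show (54 : ZMod p) = 2 * 3 ^ 3 by norm_num]; exact mul_ne_zero h2 (pow_ne_zero 3 h3)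
  have hfact : ((p / 3).factorial : ZMod p) ≠ 0 := by
    rw [Ne, ZMod.natCast_eq_zero_iff, (Fact.out : p.Prime).dvd_factorial]; omega
  obtain ⟨hden, hcast⟩ := natCast_den_trinomialSum_ne_zero_and_cast_eq h54 hfact
  refine ⟨hden, ?_⟩
  have hW := congrArg (Int.cast : ℤ → ZMod p)
    ((sum_mul_neg_one_pow_mul_two_pow_mul_choose_mul_add_choose (n + 1)).trans
      (sum_neg_one_pow_mul_choose_sq_mul_two_mul_sub n))
  push_cast at hW ⊢
  rw [hcast, sum_mul_factorial_three_mul_div_eq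
    (ZMod.three_mul_div_three_add_one_mul_add_two_eq_zero hp) h2 hfact, hn, hW]
  field_simp
  ring

theorem ratCongr_trinomialSum_of_mod_six_eq_one {p : ℕ} [Fact p.Prime] (h1 : p % 6 = 1) :
    ratCongr p 1 (trinomialSum (p / 3)) 0 := by
  have hp2 := (Fact.out : p.Prime).two_le
  obtain ⟨hden, hcast⟩ := natCast_den_trinomialSum_ne_zero_and_cast_eq_zmod
    (p := p) (n := 2 * (p / 6) - 1) (by omega) (by omega)
  refine ratCongr_one_of_cast_eq hden (by simp) ?_
  rw [hcast, sum_neg_one_pow_mul_choose_sq_of_odd ⟨p / 6 - 1, by omega⟩]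
  simp

theorem ratCongr_trinomialSum_of_mod_six_eq_five {p : ℕ} [Fact p.Prime] (h5 : p % 6 = 5) :
    ratCongr p 1 (trinomialSum (p / 3))
      ((3 : ℚ)⁻¹ * (-1 : ℚ) ^ ((p + 1) / 6) * ((2 : ℚ) ^ ((p + 1) / 3))⁻¹ *
        (((p + 1) / 3).choose ((p + 1) / 6) : ℚ)) := by
  set u := p / 6
  obtain ⟨hden, hcast⟩ := natCast_den_trinomialSum_ne_zero_and_cast_eq_zmod
    (p := p) (n := 2 * u) (by omega) (by omega)
  have h6 : 6 * ((u : ZMod p) + 1) = 1 := by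
    have h := congrArg (Nat.cast : ℕ → ZMod p) (show 6 * (u + 1) = p + 1 by omega)
    push_cast [ZMod.natCast_self] at h
    linear_combination h
  have h2 : (2 : ZMod p) ≠ 0 :=
    left_ne_zero_of_mul_eq_one (b := 3 * ((u : ZMod p) + 1)) (by linear_combination h6)
  have h3 : (3 : ZMod p) ≠ 0 :=
    left_ne_zero_of_mul_eq_one (b := 2 * ((u : ZMod p) + 1)) (by linear_combination h6)
  have hd : ((3 * 2 ^ (2 * u + 2) : ℕ) : ZMod p) ≠ 0 := by
    push_cast; exact mul_ne_zero h3 (pow_ne_zero _ h2)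
  rw [show (p + 1) / 6 = u + 1 by omega, show (p + 1) / 3 = 2 * u + 2 by omega,
    show (3 : ℚ)⁻¹ * (-1) ^ (u + 1) * ((2 : ℚ) ^ (2 * u + 2))⁻¹ * ((2 * u + 2).choose (u + 1) : ℚ)
      = (((-1) ^ (u + 1) * (2 * u + 2).choose (u + 1) : ℤ) : ℚ) / ((3 * 2 ^ (2 * u + 2) : ℕ) : ℚ) by
      push_cast; ring]
  refine ratCongr_one_of_cast_eq hden (Rat.natCast_den_intCast_div_natCast_ne_zero _ hd) ?_
  rw [hcast, Rat.cast_intCast_div_natCast hd, sum_neg_one_pow_mul_choose_sq_two_mul]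
  push_cast
  rw [choose_two_mul_add_two_eq_of_six_mul_eq_one h6]
  field_simp
  ring

theorem stmt12_general (p : ℕ) (hp : p.Prime) :
    (p % 6 = 1 →
      ratCongr p 1
        (∑ k ∈ Finset.range (p / 3 + 1),
          (k : ℚ) * ((3 * k).factorial : ℚ) / (54 ^ k * (k.factorial : ℚ) ^ 3)) 0) ∧
    (p % 6 = 5 →
      ratCongr p 1
        (∑ k ∈ Finset.range (p / 3 + 1),
          (k : ℚ) * ((3 * k).factorial : ℚ) / (54 ^ k * (k.factorial : ℚ) ^ 3))
        ((3 : ℚ)⁻¹ * (-1 : ℚ) ^ ((p + 1) / 6) * ((2 : ℚ) ^ ((p + 1) / 3))⁻¹ *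
          (((p + 1) / 3).choose ((p + 1) / 6) : ℚ))) := by
  have := Fact.mk hp
  exact ⟨ratCongr_trinomialSum_of_mod_six_eq_one, ratCongr_trinomialSum_of_mod_six_eq_five⟩

theorem stmt12 (p : ℕ) (hp : p.Prime) (hp5 : 5 < p) :
    (p % 6 = 1 →
      ratCongr p 1
        (∑ k ∈ Finset.range (p / 3 + 1),
          (k : ℚ) * ((3 * k).factorial : ℚ) / (54 ^ k * (k.factorial : ℚ) ^ 3)) 0) ∧
    (p % 6 = 5 →
      ratCongr p 1
        (∑ k ∈ Finset.range (p / 3 + 1),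
          (k : ℚ) * ((3 * k).factorial : ℚ) / (54 ^ k * (k.factorial : ℚ) ^ 3))
        ((3 : ℚ)⁻¹ * (-1 : ℚ) ^ ((p + 1) / 6) * ((2 : ℚ) ^ ((p + 1) / 3))⁻¹ *
          (((p + 1) / 3).choose ((p + 1) / 6) : ℚ))) :=
  stmt12_general p hp
end

section
/- Let p be an odd prime and x a rational p-integer with x \not\equiv 0 (mod p). Then \sum_{k=0}^{(p-1)/2} \binom{2k}{k}^2 / 16^k \cdot (x^k - \left(\frac{x}{p}\right) x^{-k}) \equiv 0 \pmod{p}, where (x/p) is the Legendre symbol of the residue of x mod p and x^{-k} is computed mod p. -/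
/-
Put `m = (p - 1) / 2`. Since `2m + 1 ≡ 0 (mod p)`, the recursion for central binomial coefficients
gives `C(2k, k) ≡ (-4)^k C(m, k)`, so the coefficient `C(2k, k)^2 / 16^k` reduces to `C(m, k)^2`.
By Euler's criterion `(x/p) ≡ x^m`, and the symmetry `C(m, k) = C(m, m - k)` turns
`∑ C(m, k)^2 x^m x^{-k}` into `∑ C(m, k)^2 x^k`: the two halves of the sum cancel modulo `p`.
Reduction modulo `p` is a ring homomorphism on the `p`-integral rationals, which carries this
back to `ℚ`.
-/

open Finset Polynomial

/-- The Legendre symbol of a `p`-integral rational `x` modulo `p`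
(for `x = m/n` it is `(mn/p)`, the symbol of the residue of `x` mod `p`). -/
def ratLegendreSym (p : ℕ) [Fact p.Prime] (x : ℚ) : ℤ :=
  legendreSym p (x.num * x.den)

theorem sum_range_choose_sq_mul_pow_sub {R : Type*} [CommSemiring R] (m : ℕ) (y : R) :
    ∑ k ∈ range (m + 1), (m.choose k : R) ^ 2 * y ^ (m - k)
      = ∑ k ∈ range (m + 1), (m.choose k : R) ^ 2 * y ^ k := by
  rw [← sum_range_reflect]
  refine sum_congr rfl fun k hk => ?_
  have hk : k ≤ m := Nat.lt_succ_iff.1 (mem_range.1 hk)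
  rw [Nat.add_sub_cancel, Nat.choose_symm hk, Nat.sub_sub_self hk]

section CharP

variable {F : Type*} [Field F] (p : ℕ) [Fact p.Prime] [CharP F p]

theorem choose_two_mul_eq_neg_four_pow_mul_choose {k : ℕ} (hk : k ≤ (p - 1) / 2) :
    ((2 * k).choose k : F) = (-4) ^ k * ((p - 1) / 2).choose k := by
  induction k with
  | zero => simp
  | succ k ih =>
    set m := (p - 1) / 2
    have hkm : k ≤ m := by omega
    have hk1 : (k + 1 : F) ≠ 0 := by
      exact_mod_cast (CharP.cast_eq_zero_iff F p (k + 1)).not.2 fun h =>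
        by have := Nat.le_of_dvd k.succ_pos h; omega
    have hm : (2 * m + 1 : F) = 0 := by
      obtain ⟨t, rfl⟩ := (Fact.out : p.Prime).odd_of_ne_two (by omega)
      have hmt : m = t := by omega
      exact_mod_cast hmt ▸ CharP.cast_eq_zero F (2 * t + 1)
    have hcentral := congrArg (Nat.cast : ℕ → F) (Nat.succ_mul_centralBinom_succ k)
    have hchoose := congrArg (Nat.cast : ℕ → F) (Nat.choose_succ_right_eq m k)
    simp only [Nat.centralBinom_eq_two_mul_choose] at hcentral
    push_cast [Nat.cast_sub hkm] at hcentral hchoose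
    apply mul_left_cancel₀ hk1
    rw [hcentral, ih hkm]
    linear_combination 4 * (-4 : F) ^ k * hchoose + 2 * (-4 : F) ^ k * (m.choose k : F) * hm

theorem sum_choose_two_mul_sq_div_sixteen_pow_mul_sub (hp : p ≠ 2) {y : F} (hy : y ≠ 0) :
    ∑ k ∈ range ((p - 1) / 2 + 1),
      ((2 * k).choose k : F) ^ 2 / 16 ^ k * (y ^ k - y ^ ((p - 1) / 2) * y⁻¹ ^ k) = 0 := by
  set m := (p - 1) / 2
  have h2 : (2 : F) ≠ 0 := by
    exact_mod_cast (CharP.cast_eq_zero_iff F p 2).not.2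
      fun h => hp ((Nat.prime_dvd_prime_iff_eq Fact.out Nat.prime_two).1 h)
  have hsq : ∀ k : ℕ, ((-4 : F) ^ k) ^ 2 / 16 ^ k = 1 := fun k => by
    rw [← pow_mul, mul_comm, pow_mul, neg_sq, show (4 : F) ^ 2 = 2 ^ 4 by norm_num,
      show (16 : F) = 2 ^ 4 by norm_num]
    exact div_self (pow_ne_zero k (pow_ne_zero 4 h2))
  have hterm : ∀ k ∈ range (m + 1),
      ((2 * k).choose k : F) ^ 2 / 16 ^ k * (y ^ k - y ^ m * y⁻¹ ^ k)
        = (m.choose k : F) ^ 2 * y ^ k - (m.choose k : F) ^ 2 * y ^ (m - k) := by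
    intro k hk
    have hk : k ≤ m := Nat.lt_succ_iff.1 (mem_range.1 hk)
    rw [choose_two_mul_eq_neg_four_pow_mul_choose p hk, mul_pow, mul_div_right_comm, hsq,
      one_mul, pow_sub₀ y hy hk, inv_pow, mul_sub]
  rw [sum_congr rfl hterm, sum_sub_distrib, sum_range_choose_sq_mul_pow_sub, sub_self]

end CharP

section pIntegral

variable (p : ℕ) [Fact p.Prime]

/-- The local ring `ℤ_(p)`, realised inside `ℚ`. -/
def pIntegral : Subring ℚ where
  carrier := {q | ¬ p ∣ q.den}
  zero_mem' := (Fact.out : p.Prime).not_dvd_one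
  one_mem' := (Fact.out : p.Prime).not_dvd_one
  add_mem' {q r} hq hr h := (Nat.Prime.dvd_mul Fact.out).not.2 (not_or.2 ⟨hq, hr⟩)
    (h.trans (Rat.add_den_dvd q r))
  mul_mem' {q r} hq hr h := (Nat.Prime.dvd_mul Fact.out).not.2 (not_or.2 ⟨hq, hr⟩)
    (h.trans (Rat.mul_den_dvd q r))
  neg_mem' {q} hq := by simpa using hq

variable {p}

theorem mem_pIntegral {q : ℚ} : q ∈ pIntegral p ↔ ¬ p ∣ q.den := Iff.rfl

theorem natCast_den_ne_zero {q : ℚ} (hq : q ∈ pIntegral p) : (q.den : ZMod p) ≠ 0 :=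
  (ZMod.natCast_eq_zero_iff _ _).not.2 hq

theorem intCast_num_ne_zero {q : ℚ} (hq : ¬ (p : ℤ) ∣ q.num) : (q.num : ZMod p) ≠ 0 :=
  (ZMod.intCast_zmod_eq_zero_iff_dvd _ _).not.2 hq

theorem inv_mem_pIntegral {q : ℚ} (hq : ¬ (p : ℤ) ∣ q.num) : q⁻¹ ∈ pIntegral p := by
  have hq0 : q ≠ 0 := by rintro rfl; simp at hq
  rw [mem_pIntegral, Rat.den_inv_of_ne_zero hq0, ← Int.natCast_dvd]
  exact hq

variable (p) in
def pIntegral.toZMod : pIntegral p →+* ZMod p where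
  toFun q := ((q : ℚ) : ZMod p)
  map_one' := by simp
  map_mul' q r := Rat.cast_mul_of_ne_zero (natCast_den_ne_zero q.2) (natCast_den_ne_zero r.2)
  map_zero' := by simp
  map_add' q r := Rat.cast_add_of_ne_zero (natCast_den_ne_zero q.2) (natCast_den_ne_zero r.2)

theorem pIntegral.toZMod_apply (q : pIntegral p) : pIntegral.toZMod p q = ((q : ℚ) : ZMod p) :=
  rfl

theorem ratCongr_one_zero_of_cast_eq_zero {a : ℚ} (ha : a ∈ pIntegral p)
    (h : (a : ZMod p) = 0) : ratCongr p 1 a 0 := by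
  rw [Rat.cast_def, div_eq_zero_iff, or_iff_left (natCast_den_ne_zero ha),
    ZMod.intCast_zmod_eq_zero_iff_dvd] at h
  obtain ⟨t, ht⟩ := h
  refine ⟨Rat.divInt t a.den, ?_, fun hp => ha ?_⟩
  · rw [sub_zero, pow_one, Rat.divInt_eq_div, ← mul_div_assoc, ← Int.cast_natCast p,
      ← Int.cast_mul, ← ht, Int.cast_natCast, Rat.num_div_den]
  · exact Int.natCast_dvd_natCast.1 ((Int.natCast_dvd_natCast.2 hp).trans (Rat.den_dvd _ _))

theorem ratLegendreSym_cast_eq_pow (hp : p ≠ 2) {q : ℚ} (hq : q ∈ pIntegral p) :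
    ((ratLegendreSym p q : ℤ) : ZMod p) = (q : ZMod p) ^ ((p - 1) / 2) := by
  obtain ⟨t, ht⟩ := (Fact.out : p.Prime).odd_of_ne_two hp
  have hd := natCast_den_ne_zero hq
  have hnum : ((q.num * q.den : ℤ) : ZMod p) = (q : ZMod p) * (q.den : ZMod p) ^ 2 := by
    rw [Rat.cast_def]
    push_cast
    field_simp
  rw [ratLegendreSym, legendreSym.eq_pow, show p / 2 = (p - 1) / 2 by omega, hnum, mul_pow,
    ← pow_mul, show 2 * ((p - 1) / 2) = p - 1 by omega, ZMod.pow_card_sub_one_eq_one hd, mul_one]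

end pIntegral

theorem stmt15 (p : ℕ) [Fact p.Prime] (hodd : p ≠ 2) (x : ℚ) (hden : ¬ (p ∣ x.den))
    (hx0 : ¬ ((p : ℤ) ∣ x.num)) :
    ratCongr p 1
      (∑ k ∈ Finset.range ((p - 1) / 2 + 1),
        ((2 * k).choose k : ℚ) ^ 2 / 16 ^ k *
          (x ^ k - (ratLegendreSym p x : ℚ) * (x⁻¹) ^ k)) 0 := by
  have h16 : ¬ (p : ℤ) ∣ (16 : ℚ).num := by
    rw [show (16 : ℚ).num = ((2 ^ 4 : ℕ) : ℤ) by norm_num, Int.natCast_dvd_natCast]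
    exact fun h => hodd <| (Nat.prime_dvd_prime_iff_eq Fact.out Nat.prime_two).1 <|
      (Fact.out : p.Prime).dvd_of_dvd_pow h
  let s : pIntegral p := ∑ k ∈ range ((p - 1) / 2 + 1),
    ((2 * k).choose k : pIntegral p) ^ 2 * ⟨16⁻¹, inv_mem_pIntegral h16⟩ ^ k *
      (⟨x, hden⟩ ^ k -
        (ratLegendreSym p x : pIntegral p) * ⟨x⁻¹, inv_mem_pIntegral hx0⟩ ^ k)
  have hx : (x : ZMod p) ≠ 0 := by
    rw [Rat.cast_def]
    exact div_ne_zero (intCast_num_ne_zero hx0) (natCast_den_ne_zero hden)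
  have hs : ((s : ℚ) : ZMod p) = 0 := calc
    ((s : ℚ) : ZMod p) = pIntegral.toZMod p s := rfl
    _ = ∑ k ∈ range ((p - 1) / 2 + 1), ((2 * k).choose k : ZMod p) ^ 2 / 16 ^ k *
          ((x : ZMod p) ^ k - (x : ZMod p) ^ ((p - 1) / 2) * (x : ZMod p)⁻¹ ^ k) := by
      simp only [s, map_sum, map_mul, map_sub, map_pow, map_intCast, map_natCast,
        pIntegral.toZMod_apply, Rat.cast_inv_of_ne_zero (intCast_num_ne_zero hx0),
        Rat.cast_inv_of_ne_zero (intCast_num_ne_zero h16), Rat.cast_ofNat,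
        ratLegendreSym_cast_eq_pow hodd hden, div_eq_mul_inv, inv_pow]
    _ = 0 := sum_choose_two_mul_sq_div_sixteen_pow_mul_sub p hodd hx
  convert ratCongr_one_zero_of_cast_eq_zero s.2 hs
  simp [s, div_eq_mul_inv]
end

section
/- Let p be an odd prime and x, 1-x both rational p-integers not divisible by p. Then \sum_{k=0}^{(p-1)/2} \binom{2k}{k}^2 / (16x)^k \equiv \left(\frac{x(x-1)}{p}\right) \sum_{k=0}^{(p-1)/2} \binom{2k}{k}^2 / (16(1-x))^k \pmod{p}. -/
open Finset Polynomial

/-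
Modulo `p = 2n + 1` one has `C(2k, k) ≡ (-4)^k C(n, k)`, so both sides are, up to powers of
`16`, values of `T(z) = ∑ C(n, k)^2 z^k` at `1/x` and `1/(1 - x)`. Since also
`C(n + k, k) ≡ (-1)^k C(n, k)`, `T` agrees mod `p` with the shifted Legendre polynomial, whence
`T(1 - z) = (-1)^n T(z)`; together with the palindromy `z^n T(1/z) = T(z)` and Fermat's
`u^(2n) = 1` this gives the congruence. Everything is transported from `ℚ` to `ZMod p` through
the residue map of the ring of `p`-integral rationals.
-/

lemma natCast_ascFactorial_eq_neg_one_pow_mul {R : Type*} [CommRing R] {a b : ℕ}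
    (h : (a : R) = -b) (k : ℕ) :
    (a.ascFactorial k : R) = (-1) ^ k * b.descFactorial k := by
  rw [← ascPochhammer_nat_eq_ascFactorial, ascPochhammer_eval_cast, h,
    ascPochhammer_eval_neg_eq_descPochhammer, descPochhammer_eval_eq_descFactorial]

def binomSqSum {R : Type*} [CommSemiring R] (n : ℕ) (z : R) : R :=
  ∑ k ∈ range (n + 1), (n.choose k : R) ^ 2 * z ^ k

def centralBinomSqSum {R : Type*} [CommSemiring R] (n : ℕ) (t : R) : R :=
  ∑ k ∈ range (n + 1), ((2 * k).choose k : R) ^ 2 * t ^ k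

lemma map_centralBinomSqSum {R S : Type*} [CommSemiring R] [CommSemiring S] (f : R →+* S)
    (n : ℕ) (t : R) : f (centralBinomSqSum n t) = centralBinomSqSum n (f t) := by
  simp [centralBinomSqSum, map_sum]

lemma centralBinomSqSum_inv {K : Type*} [Field K] (n : ℕ) (y : K) :
    centralBinomSqSum n y⁻¹ = ∑ k ∈ range (n + 1), ((2 * k).choose k : K) ^ 2 / y ^ k := by
  simp [centralBinomSqSum, div_eq_mul_inv]

lemma pow_mul_binomSqSum_inv {K : Type*} [Field K] (n : ℕ) {z : K} (hz : z ≠ 0) :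
    z ^ n * binomSqSum n z⁻¹ = binomSqSum n z := by
  rw [binomSqSum, binomSqSum, mul_sum, ← sum_range_reflect]
  refine sum_congr rfl fun k hk => ?_
  have hk : k ≤ n := Nat.lt_succ_iff.mp (mem_range.mp hk)
  rw [add_tsub_cancel_right, Nat.choose_symm hk, inv_pow, mul_left_comm,
    ← pow_sub₀ _ hz (Nat.sub_le n k), Nat.sub_sub_self hk]

section HalfOfOddPrime

variable {p n : ℕ} [Fact p.Prime]

lemma natCast_factorial_ne_zero {k : ℕ} (hk : k < p) : (k.factorial : ZMod p) ≠ 0 := by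
  rw [Ne, ZMod.natCast_eq_zero_iff, (Fact.out : p.Prime).dvd_factorial]
  omega

lemma sixteen_ne_zero (hp : p ≠ 2) : (16 : ZMod p) ≠ 0 := by
  rw [show (16 : ZMod p) = 2 ^ 4 by norm_num]
  exact pow_ne_zero 4 (Ring.two_ne_zero (by rwa [ZMod.ringChar_zmod_n]))

lemma choose_add_cast_eq (hp : p = 2 * n + 1) {k : ℕ} (hk : k ≤ n) :
    ((n + k).choose k : ZMod p) = (-1) ^ k * n.choose k := by
  have hn : ((n + 1 : ℕ) : ZMod p) = -n := by
    rw [eq_neg_iff_add_eq_zero, ← Nat.cast_add, ZMod.natCast_eq_zero_iff]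
    exact ⟨1, by omega⟩
  have := natCast_ascFactorial_eq_neg_one_pow_mul hn k
  rw [Nat.ascFactorial_eq_factorial_mul_choose, Nat.descFactorial_eq_factorial_mul_choose] at this
  push_cast at this
  exact mul_left_cancel₀ (natCast_factorial_ne_zero (p := p) (k := k) (by omega))
    (by linear_combination this)

lemma choose_two_mul_cast_eq (hp : p = 2 * n + 1) {k : ℕ} (hk : k ≤ n) :
    ((2 * k).choose k : ZMod p) = (-4) ^ k * n.choose k := by
  -- Both sides satisfy `(k + 1) a (k + 1) = 2 (2k + 1) a k`, as `2 (2k + 1) = -4 (n - k)` mod `p`.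
  induction k with
  | zero => simp
  | succ k ih =>
    have hrec := Nat.succ_mul_centralBinom_succ k
    have hstep := Nat.choose_succ_right_eq n k
    rw [Nat.centralBinom_eq_two_mul_choose, Nat.centralBinom_eq_two_mul_choose] at hrec
    have h2n : ((2 * n + 1 : ℕ) : ZMod p) = 0 := by rw [← hp, ZMod.natCast_self]
    push_cast at h2n
    have hk1 : ((k + 1 : ℕ) : ZMod p) ≠ 0 := by
      rw [Ne, ZMod.natCast_eq_zero_iff]
      exact fun h => absurd (Nat.le_of_dvd (by omega) h) (by omega)
    apply mul_left_cancel₀ hk1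
    have hrec' := congrArg (Nat.cast : ℕ → ZMod p) hrec
    have hstep' := congrArg (Nat.cast : ℕ → ZMod p) hstep
    push_cast [Nat.cast_sub (by omega : k ≤ n)] at hrec' hstep' ⊢
    rw [ih (by omega)] at hrec'
    linear_combination hrec' - (-4) ^ (k + 1) * hstep' +
      2 * (-4) ^ k * (n.choose k : ZMod p) * h2n

lemma binomSqSum_eq_aeval_shiftedLegendre (hp : p = 2 * n + 1) (z : ZMod p) :
    binomSqSum n z = aeval z (shiftedLegendre n) := by
  simp only [binomSqSum, shiftedLegendre, map_sum, map_mul, map_pow, aeval_X,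
    map_neg, map_one, map_natCast]
  refine sum_congr rfl fun k hk => ?_
  rw [Nat.choose_symm_add, choose_add_cast_eq hp (Nat.lt_succ_iff.mp (mem_range.mp hk)),
    mul_mul_mul_comm, ← mul_pow, neg_one_mul, neg_neg, one_pow, one_mul, sq]

lemma binomSqSum_one_sub (hp : p = 2 * n + 1) (z : ZMod p) :
    binomSqSum n (1 - z) = (-1) ^ n * binomSqSum n z := by
  rw [binomSqSum_eq_aeval_shiftedLegendre hp, binomSqSum_eq_aeval_shiftedLegendre hp,
    shiftedLegendre_eval_symm n (1 - z), sub_sub_cancel]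

lemma centralBinomSqSum_eq_binomSqSum (hp : p = 2 * n + 1) (z : ZMod p) :
    centralBinomSqSum n (16⁻¹ * z) = binomSqSum n z := by
  have h16 := sixteen_ne_zero (p := p) (by omega)
  refine sum_congr rfl fun k hk => ?_
  rw [choose_two_mul_cast_eq hp (Nat.lt_succ_iff.mp (mem_range.mp hk)), mul_pow, mul_pow,
    ← pow_mul, mul_comm k 2, pow_mul, inv_pow, show (-4 : ZMod p) ^ 2 = 16 by norm_num]
  field_simp

lemma centralBinomSqSum_inv_sixteen_mul (hp : p = 2 * n + 1) {u : ZMod p} (hu : u ≠ 0)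
    (hu1 : 1 - u ≠ 0) :
    centralBinomSqSum n (16 * u)⁻¹ =
      (u * (u - 1)) ^ n * centralBinomSqSum n (16 * (1 - u))⁻¹ := by
  rw [mul_inv, mul_inv, centralBinomSqSum_eq_binomSqSum hp, centralBinomSqSum_eq_binomSqSum hp]
  have e1 := pow_mul_binomSqSum_inv n hu
  have e2 := pow_mul_binomSqSum_inv n hu1
  rw [binomSqSum_one_sub hp] at e2
  have e3 : u ^ n * u ^ n = 1 := by
    rw [← pow_add, ← ZMod.pow_card_sub_one_eq_one hu]; congr 1; omega
  have e4 : ((-1 : ZMod p) ^ n) * (-1) ^ n = 1 := by rw [← mul_pow, neg_one_mul, neg_neg, one_pow]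
  have e5 : (u * (u - 1)) ^ n = u ^ n * ((-1) ^ n * (1 - u) ^ n) := by
    rw [← mul_pow, ← mul_pow]; ring_nf
  calc binomSqSum n u⁻¹ = u ^ n * (u ^ n * binomSqSum n u⁻¹) := by
        rw [← mul_assoc, e3, one_mul]
    _ = u ^ n * ((-1) ^ n * ((-1) ^ n * binomSqSum n u)) := by
        rw [e1, ← mul_assoc ((-1) ^ n), e4, one_mul]
    _ = (u * (u - 1)) ^ n * binomSqSum n (1 - u)⁻¹ := by rw [← e2, e5]; ring

end HalfOfOddPrime

def pIntegers (p : ℕ) [Fact p.Prime] : Subring ℚ := (Rat.padicValuation p).integer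

namespace pIntegers

variable {p : ℕ} [Fact p.Prime]

lemma mem_iff {q : ℚ} : q ∈ pIntegers p ↔ ¬ p ∣ q.den := Rat.padicValuation_le_one_iff

lemma natCast_den_ne_zero {q : ℚ} (hq : q ∈ pIntegers p) : (q.den : ZMod p) ≠ 0 := by
  rwa [Ne, ZMod.natCast_eq_zero_iff, ← mem_iff]

lemma ratCast_mul {a b : ℚ} (ha : a ∈ pIntegers p) (hb : b ∈ pIntegers p) :
    ((a * b : ℚ) : ZMod p) = a * b :=
  Rat.cast_mul_of_ne_zero (natCast_den_ne_zero ha) (natCast_den_ne_zero hb)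

lemma ratCast_sub {a b : ℚ} (ha : a ∈ pIntegers p) (hb : b ∈ pIntegers p) :
    ((a - b : ℚ) : ZMod p) = a - b :=
  Rat.cast_sub_of_ne_zero (natCast_den_ne_zero ha) (natCast_den_ne_zero hb)

-- Off `pIntegers p` the cast `ℚ → ZMod p` divides by `0`; on it, it is a ring hom.
variable (p) in
def residue : pIntegers p →+* ZMod p where
  toFun q := ((q : ℚ) : ZMod p)
  map_one' := Rat.cast_one
  map_mul' a b := ratCast_mul a.2 b.2
  map_zero' := Rat.cast_zero
  map_add' a b := Rat.cast_add_of_ne_zero (natCast_den_ne_zero a.2) (natCast_den_ne_zero b.2)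

lemma residue_apply (q : pIntegers p) : residue p q = ((q : ℚ) : ZMod p) := rfl

lemma ratCast_eq_zero_iff {q : ℚ} (hq : q ∈ pIntegers p) :
    (q : ZMod p) = 0 ↔ (p : ℤ) ∣ q.num := by
  rw [Rat.cast_def, div_eq_zero_iff, or_iff_left (natCast_den_ne_zero hq),
    ZMod.intCast_zmod_eq_zero_iff_dvd]

lemma inv_mem {q : ℚ} (hq : q ∈ pIntegers p) (h : (q : ZMod p) ≠ 0) :
    q⁻¹ ∈ pIntegers p := by
  rw [Ne, ratCast_eq_zero_iff hq] at h
  have hq0 : q ≠ 0 := by rintro rfl; simp at h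
  rw [mem_iff, Rat.den_inv_of_ne_zero hq0, ← Int.ofNat_dvd_left]
  exact h

lemma ratCongr_of_ratCast_eq {a b : ℚ} (ha : a ∈ pIntegers p) (hb : b ∈ pIntegers p)
    (h : (a : ZMod p) = b) : ratCongr p 1 a b := by
  have hd : a - b ∈ pIntegers p := sub_mem ha hb
  have hd0 : ((a - b : ℚ) : ZMod p) = 0 := by rw [ratCast_sub ha hb, h, sub_self]
  obtain ⟨m, hm⟩ := (ratCast_eq_zero_iff hd).1 hd0
  refine ⟨m / (a - b).den, ?_, ?_⟩
  · rw [pow_one, ← mul_div_assoc, ← Int.cast_natCast, ← Int.cast_mul, ← hm,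
      Rat.num_div_den]
  · rw [← mem_iff, div_eq_mul_inv]
    refine mul_mem (intCast_mem _ m) (inv_mem (natCast_mem _ _) ?_)
    rw [Rat.cast_natCast]
    exact natCast_den_ne_zero hd

lemma ratCast_ratLegendreSym {n : ℕ} (hp : p = 2 * n + 1) {q : ℚ} (hq : q ∈ pIntegers p) :
    ((ratLegendreSym p q : ℤ) : ZMod p) = (q : ZMod p) ^ n := by
  have hd := natCast_den_ne_zero hq
  have hfermat : ((q.den : ZMod p) ^ n) ^ 2 = 1 := by
    rw [← pow_mul, ← ZMod.pow_card_sub_one_eq_one hd]; congr 1; omega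
  rw [ratLegendreSym, legendreSym.eq_pow, show p / 2 = n by omega, Int.cast_mul, Int.cast_natCast,
    Rat.cast_def q, div_pow, mul_pow]
  field_simp
  linear_combination (q.num : ZMod p) ^ n * hfermat

lemma ratCast_inv {q : ℚ} (hq : q ∈ pIntegers p) (h : (q : ZMod p) ≠ 0) :
    ((q⁻¹ : ℚ) : ZMod p) = (q : ZMod p)⁻¹ := by
  rw [Ne, ratCast_eq_zero_iff hq, ← ZMod.intCast_zmod_eq_zero_iff_dvd] at h
  exact Rat.cast_inv_of_ne_zero h

lemma coe_centralBinomSqSum (n : ℕ) (t : pIntegers p) :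
    ((centralBinomSqSum n t : pIntegers p) : ℚ) = centralBinomSqSum n (t : ℚ) :=
  map_centralBinomSqSum (pIntegers p).subtype n t

lemma centralBinomSqSum_mem (n : ℕ) {t : ℚ} (ht : t ∈ pIntegers p) :
    centralBinomSqSum n t ∈ pIntegers p :=
  coe_centralBinomSqSum n ⟨t, ht⟩ ▸ (centralBinomSqSum n (⟨t, ht⟩ : pIntegers p)).2

lemma ratCast_centralBinomSqSum (n : ℕ) {t : ℚ} (ht : t ∈ pIntegers p) :
    ((centralBinomSqSum n t : ℚ) : ZMod p) = centralBinomSqSum n (t : ZMod p) := by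
  rw [← coe_centralBinomSqSum n ⟨t, ht⟩, ← residue_apply, map_centralBinomSqSum]
  rfl

lemma centralBinomSqSum_inv_sixteen_mul_mem (hp : p ≠ 2) (n : ℕ) {y : ℚ}
    (hy : y ∈ pIntegers p) (h : (y : ZMod p) ≠ 0) :
    centralBinomSqSum n (16 * y)⁻¹ ∈ pIntegers p := by
  have h16y := mul_mem (ofNat_mem _ 16) hy
  refine centralBinomSqSum_mem n (inv_mem h16y ?_)
  rw [ratCast_mul (ofNat_mem _ 16) hy, Rat.cast_ofNat]
  exact mul_ne_zero (sixteen_ne_zero hp) h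

lemma ratCast_centralBinomSqSum_inv_sixteen_mul (hp : p ≠ 2) (n : ℕ) {y : ℚ}
    (hy : y ∈ pIntegers p) (h : (y : ZMod p) ≠ 0) :
    ((centralBinomSqSum n (16 * y)⁻¹ : ℚ) : ZMod p) =
      centralBinomSqSum n (16 * (y : ZMod p))⁻¹ := by
  have h16y := mul_mem (ofNat_mem _ 16) hy
  have hcast : ((16 * y : ℚ) : ZMod p) = 16 * y := by
    rw [ratCast_mul (ofNat_mem _ 16) hy, Rat.cast_ofNat]
  have h16y0 : ((16 * y : ℚ) : ZMod p) ≠ 0 := hcast ▸ mul_ne_zero (sixteen_ne_zero hp) h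
  rw [ratCast_centralBinomSqSum n (inv_mem h16y h16y0), ratCast_inv h16y h16y0, hcast]

end pIntegers

theorem stmt16_general (p : ℕ) [Fact p.Prime] (hodd : p ≠ 2) (x : ℚ) (hden : ¬ (p ∣ x.den))
    (hx0 : ¬ ((p : ℤ) ∣ x.num))
    (hx1 : ¬ ((p : ℤ) ∣ (1 - x).num)) :
    ratCongr p 1
      (∑ k ∈ Finset.range ((p - 1) / 2 + 1), ((2 * k).choose k : ℚ) ^ 2 / (16 * x) ^ k)
      ((ratLegendreSym p (x * (x - 1)) : ℚ) *
        ∑ k ∈ Finset.range ((p - 1) / 2 + 1),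
          ((2 * k).choose k : ℚ) ^ 2 / (16 * (1 - x)) ^ k) := by
  open pIntegers in
  obtain ⟨n, hn⟩ := (Fact.out : p.Prime).odd_of_ne_two hodd
  have hx : x ∈ pIntegers p := mem_iff.2 hden
  have hx' : 1 - x ∈ pIntegers p := sub_mem (one_mem _) hx
  have hu : (x : ZMod p) ≠ 0 := mt (ratCast_eq_zero_iff hx).1 hx0
  have hu1 : ((1 - x : ℚ) : ZMod p) ≠ 0 := mt (ratCast_eq_zero_iff hx').1 hx1
  have hv : ((1 - x : ℚ) : ZMod p) = 1 - x := by rw [ratCast_sub (one_mem _) hx, Rat.cast_one]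
  have hw : ((x * (x - 1) : ℚ) : ZMod p) = x * (x - 1) := by
    rw [ratCast_mul hx (sub_mem hx (one_mem _)), ratCast_sub hx (one_mem _), Rat.cast_one]
  rw [show (p - 1) / 2 = n by omega, ← centralBinomSqSum_inv, ← centralBinomSqSum_inv]
  have hB := centralBinomSqSum_inv_sixteen_mul_mem hodd n hx' hu1
  refine ratCongr_of_ratCast_eq (centralBinomSqSum_inv_sixteen_mul_mem hodd n hx hu)
    (mul_mem (intCast_mem _ _) hB) ?_
  rw [ratCast_mul (intCast_mem _ _) hB, Rat.cast_intCast,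
    ratCast_ratLegendreSym hn (mul_mem hx (sub_mem hx (one_mem _))), hw,
    ratCast_centralBinomSqSum_inv_sixteen_mul hodd n hx hu,
    ratCast_centralBinomSqSum_inv_sixteen_mul hodd n hx' hu1, hv]
  exact centralBinomSqSum_inv_sixteen_mul hn hu (hv ▸ hu1)

theorem stmt16 (p : ℕ) [Fact p.Prime] (hodd : p ≠ 2) (x : ℚ) (hden : ¬ (p ∣ x.den))
    (hden' : ¬ (p ∣ (1 - x).den)) (hx0 : ¬ ((p : ℤ) ∣ x.num))
    (hx1 : ¬ ((p : ℤ) ∣ (1 - x).num)) :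
    ratCongr p 1
      (∑ k ∈ Finset.range ((p - 1) / 2 + 1), ((2 * k).choose k : ℚ) ^ 2 / (16 * x) ^ k)
      ((ratLegendreSym p (x * (x - 1)) : ℚ) *
        ∑ k ∈ Finset.range ((p - 1) / 2 + 1),
          ((2 * k).choose k : ℚ) ^ 2 / (16 * (1 - x)) ^ k) :=
  stmt16_general p hodd x hden hx0 hx1
end

section
/- For every natural number n and variable x, \sum_{k=0}^{n} \binom{2n-2k}{n-k} \binom{2k}{k} x^{2k} = 4^n x^n P_n((x + x^{-1})/2), interpreted as a polynomial identity (both sides are polynomials in x after clearing x^n). -/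
/-!
With `S(t) = ∑ C(2k,k) tᵏ = (1 - 4t)^{-1/2}`, the left-hand side is the coefficient of `tⁿ`
in `S(x²t) S(t)`, whose square is `((1 - 4t)(1 - 4x²t))⁻¹`. Expanding Rodrigues' formula shows
that the Legendre generating function `∑ Pₙ(y) tⁿ` is `S(t(2y - t)/4)`, whose square is
`(1 - 2yt + t²)⁻¹`. For `2xy = x² + 1` the substitution `t ↦ 4xt` turns `1 - 2yt + t²` into
`(1 - 4t)(1 - 4x²t)`, and two power series with constant term `1` and equal squares coincide.
-/

open Finset Polynomial

theorem Nat.choose_two_mul_mul_choose {d n : ℕ} (h : d ≤ n) :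
    (2 * d).choose n * n.choose d = d.centralBinom * d.choose (n - d) := by
  rw [Nat.choose_mul h, Nat.centralBinom_eq_two_mul_choose, Nat.two_mul, Nat.add_sub_cancel]

theorem neg_one_pow_add_mul_pow_div_two_pow {K : Type*} [Field K] [CharZero K] {d n : ℕ}
    (hdn : d ≤ n) (hnd : n ≤ 2 * d) (y : K) :
    (-1) ^ (d + n) * y ^ (2 * d - n) / 2 ^ n = (-1 / 4) ^ d * (-2 * y) ^ (2 * d - n) := by
  obtain ⟨j, i, rfl, rfl⟩ : ∃ j i, n = 2 * j + i ∧ d = j + i :=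
    ⟨n - d, 2 * d - n, by omega, by omega⟩
  rw [show 2 * (j + i) - (2 * j + i) = i by omega,
    show (-1 / 4 : K) = -1 * (2 ^ 2)⁻¹ by norm_num, show -2 * y = -1 * (2 * y) by ring]
  simp only [mul_pow, inv_pow, ← pow_mul, pow_add]
  field_simp
  ring_nf
  simp [pow_mul']

theorem Polynomial.coeff_C_mul_X_mul_X_add_C_pow {R : Type*} [CommSemiring R] (a r : R)
    (d n : ℕ) :
    ((C a * X * (X + C r)) ^ d).coeff n =
      if d ≤ n then a ^ d * r ^ (2 * d - n) * d.choose (n - d) else 0 := by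
  have h : (C a * X * (X + C r)) ^ d = C (a ^ d) * ((X + C r) ^ d * X ^ d) := by
    rw [mul_pow, mul_pow, map_pow]
    ring
  rw [h, coeff_C_mul, coeff_mul_X_pow']
  split_ifs with hdn
  · rw [coeff_X_add_C_pow, show d - (n - d) = 2 * d - n by omega, mul_assoc]
  · rw [mul_zero]

theorem legendre_eval_eq_sum (n : ℕ) (y : ℚ) :
    (legendre n).eval y = ∑ k ∈ range (n + 1),
      (-1) ^ (k + n) * ((2 * k).choose n * n.choose k : ℚ) * y ^ (2 * k - n) / 2 ^ n := by
  have hexp : ((X ^ 2 - 1 : ℚ[X]) ^ n) =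
      ∑ k ∈ range (n + 1), C ((-1) ^ (k + n) * n.choose k : ℚ) * X ^ (2 * k) := by
    rw [sub_pow]
    refine sum_congr rfl fun k _ => ?_
    simp only [one_pow, mul_one, ← pow_mul, map_mul, map_pow, map_neg, map_one, map_natCast]
    ring
  simp only [legendre, hexp, iterate_derivative_sum, iterate_derivative_C_mul,
    iterate_derivative_X_pow_eq_C_mul, eval_smul, eval_finsetSum, eval_mul, eval_C, eval_pow,
    eval_X, smul_eq_mul, mul_sum, Nat.descFactorial_eq_factorial_mul_choose]
  refine sum_congr rfl fun k _ => ?_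
  push_cast
  field_simp

namespace PowerSeries

theorem eq_of_sq_eq_sq {R : Type*} [CommRing R] [IsDomain R] [NeZero (2 : R)] {f g : R⟦X⟧}
    (h : f ^ 2 = g ^ 2) (hc : constantCoeff f = constantCoeff g) (hf : constantCoeff f ≠ 0) :
    f = g := by
  refine (sq_eq_sq_iff_eq_or_eq_neg.mp h).resolve_right fun hfg => hf ?_
  have h2 := congrArg constantCoeff hfg
  rw [map_neg, ← hc, eq_neg_iff_add_eq_zero, ← two_mul] at h2
  exact (mul_eq_zero.mp h2).resolve_left two_ne_zero

noncomputable def centralBinomSeries (R : Type*) [Semiring R] : R⟦X⟧ :=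
  mk fun n => (n.centralBinom : R)

variable (R : Type*) [CommRing R]

theorem coeff_rescale_centralBinomSeries_mul (a : R) (n : ℕ) :
    coeff n (rescale a (centralBinomSeries R) * centralBinomSeries R) =
      ∑ k ∈ range (n + 1), a ^ k * k.centralBinom * (n - k).centralBinom := by
  rw [coeff_mul, Finset.Nat.sum_antidiagonal_eq_sum_range_succ
    (fun i j => coeff i (rescale a (centralBinomSeries R)) * coeff j (centralBinomSeries R))]
  simp only [coeff_rescale, centralBinomSeries, coeff_mk]

theorem one_sub_four_X_mul_derivative_centralBinomSeries :
    (1 - 4 * X) * d⁄dX R (centralBinomSeries R) = 2 * centralBinomSeries R := by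
  ext n
  rw [← map_ofNat C 4, ← map_ofNat C 2, sub_mul, one_mul, mul_assoc, map_sub, coeff_C_mul,
    coeff_C_mul]
  rcases n with _ | n
  · simp [centralBinomSeries, coeff_derivative, Nat.centralBinom]
  · have h := congrArg (Nat.cast (R := R)) (Nat.succ_mul_centralBinom_succ (n + 1))
    push_cast at h
    simp only [centralBinomSeries, coeff_derivative, coeff_succ_X_mul, coeff_mk]
    push_cast
    linear_combination h

theorem one_sub_four_X_mul_centralBinomSeries_sq [IsAddTorsionFree R] :
    (1 - 4 * X) * centralBinomSeries R ^ 2 = 1 := by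
  have hS := one_sub_four_X_mul_derivative_centralBinomSeries R
  apply derivative.ext
  · rw [← map_ofNat C 4]
    simp only [derivative_one, Derivation.leibniz, Derivation.leibniz_pow, map_sub, derivative_C,
      derivative_X, smul_eq_mul]
    rw [map_ofNat]
    linear_combination 2 * centralBinomSeries R * hS
  · simp [centralBinomSeries]

end PowerSeries

open PowerSeries

noncomputable def legendreSeries (y : ℚ) : ℚ⟦X⟧ :=
  PowerSeries.mk fun n => (legendre n).eval y

theorem legendreSeries_eq_subst (y : ℚ) :
    legendreSeries y =
      (centralBinomSeries ℚ).subst ((Polynomial.C (-1 / 4) * Polynomial.X *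
        (Polynomial.X + Polynomial.C (-2 * y)) : ℚ[X]) : ℚ⟦X⟧) := by
  set w : ℚ[X] := Polynomial.C (-1 / 4) * Polynomial.X * (Polynomial.X + Polynomial.C (-2 * y))
  have hw : HasSubst (w : ℚ⟦X⟧) := HasSubst.of_constantCoeff_zero' (by simp [w])
  have hcoeff (d n : ℕ) : PowerSeries.coeff n ((w : ℚ⟦X⟧) ^ d) =
      if d ≤ n then (-1 / 4) ^ d * (-2 * y) ^ (2 * d - n) * d.choose (n - d) else 0 := by
    rw [← Polynomial.coe_pow, Polynomial.coeff_coe, coeff_C_mul_X_mul_X_add_C_pow]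
  ext n
  rw [legendreSeries, coeff_mk, legendre_eval_eq_sum, coeff_subst' hw,
    finsum_eq_sum_of_support_subset (s := range (n + 1))]
  · refine sum_congr rfl fun d hd => ?_
    have hdn : d ≤ n := Nat.lt_succ_iff.mp (mem_range.mp hd)
    rw [hcoeff, if_pos hdn, centralBinomSeries, coeff_mk, smul_eq_mul,
      ← Nat.cast_mul, Nat.choose_two_mul_mul_choose hdn]
    push_cast
    rcases le_or_gt n (2 * d) with hnd | hnd
    · rw [← neg_one_pow_add_mul_pow_div_two_pow hdn hnd]
      ring
    · simp [Nat.choose_eq_zero_of_lt (by omega : d < n - d)]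
  · intro d hd
    rw [Function.mem_support, hcoeff] at hd
    simp only [coe_range, Set.mem_Iio]
    by_contra h
    exact hd (by rw [if_neg (by omega), smul_zero])

theorem one_sub_two_mul_X_add_X_sq_mul_legendreSeries_sq (y : ℚ) :
    (1 - 2 * PowerSeries.C y * PowerSeries.X + PowerSeries.X ^ 2) * legendreSeries y ^ 2 = 1 := by
  set w : ℚ[X] := Polynomial.C (-1 / 4) * Polynomial.X * (Polynomial.X + Polynomial.C (-2 * y))
  have hw : HasSubst (w : ℚ⟦X⟧) := HasSubst.of_constantCoeff_zero' (by simp [w])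
  have h := congrArg (substAlgHom (R := ℚ) hw) (one_sub_four_X_mul_centralBinomSeries_sq ℚ)
  rw [map_mul, map_sub, map_mul, map_pow, map_one, map_ofNat, substAlgHom_X, coe_substAlgHom,
    ← legendreSeries_eq_subst] at h
  convert h using 2
  have h4 : (4 : ℚ⟦X⟧) * PowerSeries.C (-1 / 4) = -1 := by
    rw [← map_ofNat PowerSeries.C 4, ← map_mul]
    norm_num
  simp only [w, Polynomial.coe_mul, Polynomial.coe_add, Polynomial.coe_C, Polynomial.coe_X]
  simp only [map_mul, map_neg, map_ofNat]
  linear_combination PowerSeries.X * (PowerSeries.X - 2 * PowerSeries.C y) * h4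

theorem rescale_mul_centralBinomSeries_eq_rescale_legendreSeries {x y : ℚ}
    (hxy : 2 * x * y = x ^ 2 + 1) :
    rescale (x ^ 2) (centralBinomSeries ℚ) * centralBinomSeries ℚ =
      rescale (4 * x) (legendreSeries y) := by
  have hS := one_sub_four_X_mul_centralBinomSeries_sq ℚ
  have hS' := congrArg (rescale (x ^ 2)) hS
  have hL := congrArg (rescale (4 * x)) (one_sub_two_mul_X_add_X_sq_mul_legendreSeries_sq y)
  have hC : rescale (4 * x) (PowerSeries.C y) = PowerSeries.C y := by
    ext n
    rcases n with _ | n <;> simp [PowerSeries.coeff_C]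
  have hxy' := congrArg PowerSeries.C hxy
  simp only [map_mul, map_sub, map_add, map_one, map_ofNat, map_pow, rescale_X, hC] at hS' hL hxy'
  have hA : (1 - 4 * PowerSeries.X) * (1 - 4 * (PowerSeries.C x ^ 2 * PowerSeries.X)) *
      (rescale (x ^ 2) (centralBinomSeries ℚ) * centralBinomSeries ℚ) ^ 2 = 1 := by
    linear_combination (1 - 4 * (PowerSeries.C x ^ 2 * PowerSeries.X)) *
      rescale (x ^ 2) (centralBinomSeries ℚ) ^ 2 * hS + hS'
  have hB : (1 - 4 * PowerSeries.X) * (1 - 4 * (PowerSeries.C x ^ 2 * PowerSeries.X)) *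
      rescale (4 * x) (legendreSeries y) ^ 2 = 1 := by
    linear_combination hL + 4 * PowerSeries.X * rescale (4 * x) (legendreSeries y) ^ 2 * hxy'
  have hp : (1 - 4 * PowerSeries.X) * (1 - 4 * (PowerSeries.C x ^ 2 * PowerSeries.X)) ≠ 0 :=
    fun h0 => by simp [h0] at hA
  refine eq_of_sq_eq_sq (mul_left_cancel₀ hp (hA.trans hB.symm)) ?_ ?_
  all_goals simp only [map_mul, ← coeff_zero_eq_constantCoeff_apply, coeff_rescale]
  · simp [centralBinomSeries, legendreSeries, legendre]
  · simp [centralBinomSeries]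

theorem stmt17 (n : ℕ) (x : ℚ) (hx : x ≠ 0) :
    ∑ k ∈ Finset.range (n + 1),
      ((2 * n - 2 * k).choose (n - k) * (2 * k).choose k : ℚ) * x ^ (2 * k) =
    4 ^ n * x ^ n * (legendre n).eval ((x + x⁻¹) / 2) := by
  have hxy : 2 * x * ((x + x⁻¹) / 2) = x ^ 2 + 1 := by
    field_simp
  have key := congrArg (PowerSeries.coeff n)
    (rescale_mul_centralBinomSeries_eq_rescale_legendreSeries hxy)
  rw [coeff_rescale_centralBinomSeries_mul, coeff_rescale, legendreSeries, coeff_mk, mul_pow]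
    at key
  rw [← key]
  refine sum_congr rfl fun k _ => ?_
  rw [show 2 * n - 2 * k = 2 * (n - k) by omega, ← Nat.centralBinom_eq_two_mul_choose,
    ← Nat.centralBinom_eq_two_mul_choose, pow_mul]
  ring
end
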